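/- arXiv:1103.5599 — 2 statements merged into one kernel-verified Lean document; each statement's English description precedes it below -/
import Mathlib

section
/- Let G = (V,E) be a finite simple graph and B a bcc-clean simple K-join of G with ordering b_1, …, b_p where p ≥ 2(k + 1). Let M = {b_{k+2}, …, b_{p−k−1}} be B minus its k + 1 first and k + 1 last vertices. Then G admits a bcc-k-completion if and only if the induced subgraph G − M on V ∖ M admits a bcc-k-completion. -/
open SimpleGraph Finset

variable {V : Type*}

/-- `f` is an (injective, hence linear) umbrella ordering of the graph `G`. -/
def IsUmbrellaOrdering (G : SimpleGraph V) (f : V → ℕ) : Prop :=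
  Function.Injective f ∧
    ∀ u v w : V, f u < f v → f v < f w → G.Adj u w → G.Adj u v ∧ G.Adj v w

/-- A graph is a proper interval graph iff it admits an umbrella ordering. -/
def IsProperIntervalGraph (G : SimpleGraph V) : Prop :=
  ∃ f : V → ℕ, IsUmbrellaOrdering G f

/-- The graph `G + F` obtained by adding the set `F` of pairs as edges. -/
def addEdges (G : SimpleGraph V) (F : Finset (Sym2 V)) : SimpleGraph V :=
  G ⊔ SimpleGraph.fromEdgeSet ↑F

/-- `F` is a completion of `G`: a set of non-loop non-edges whose addition
makes `G` a proper interval graph. -/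
def IsCompletion (G : SimpleGraph V) (F : Finset (Sym2 V)) : Prop :=
  (∀ e ∈ F, ¬ e.IsDiag) ∧ (∀ e ∈ F, e ∉ G.edgeSet) ∧
    IsProperIntervalGraph (addEdges G F)

/-- `F` is a `k`-completion of `G`. -/
def IsKCompletion (G : SimpleGraph V) (k : ℕ) (F : Finset (Sym2 V)) : Prop :=
  IsCompletion G F ∧ F.card ≤ k

/-- `uv` is an extremal edge of `G` with respect to the ordering `f`. -/
def IsExtremalEdge (G : SimpleGraph V) (f : V → ℕ) (u v : V) : Prop :=
  G.Adj u v ∧ f u < f v ∧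
    ∀ u' v' : V, G.Adj u' v' → f u' ≤ f u → f v ≤ f v' → u' = u ∧ v' = v

/-- `c` is the center and `l₁, l₂, l₃` the leaves of an induced claw of `G`. -/
def IsClaw (G : SimpleGraph V) (c l₁ l₂ l₃ : V) : Prop :=
  G.Adj c l₁ ∧ G.Adj c l₂ ∧ G.Adj c l₃ ∧
    ¬ G.Adj l₁ l₂ ∧ ¬ G.Adj l₁ l₃ ∧ ¬ G.Adj l₂ l₃ ∧ l₁ ≠ l₂ ∧ l₁ ≠ l₃ ∧ l₂ ≠ l₃

/-- `a b c d` is an induced 4-cycle of `G` (in this cyclic order). -/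
def IsInducedC4 (G : SimpleGraph V) (a b c d : V) : Prop :=
  G.Adj a b ∧ G.Adj b c ∧ G.Adj c d ∧ G.Adj d a ∧
    ¬ G.Adj a c ∧ ¬ G.Adj b d ∧ a ≠ c ∧ b ≠ d

/-- `x` belongs to some claw of `G` (as center or leaf). -/
def InClaw (G : SimpleGraph V) (x : V) : Prop :=
  ∃ a b c d, IsClaw G a b c d ∧ (x = a ∨ x = b ∨ x = c ∨ x = d)

/-- `x` belongs to some induced 4-cycle of `G`. -/
def InC4 (G : SimpleGraph V) (x : V) : Prop :=
  ∃ a b c d, IsInducedC4 G a b c d ∧ (x = a ∨ x = b ∨ x = c ∨ x = d)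

/-- `{x, y, z}` is an independent set of size 3 (a `3K₁`) of `G`. -/
def IsInd3 (G : SimpleGraph V) (x y z : V) : Prop :=
  x ≠ y ∧ x ≠ z ∧ y ≠ z ∧ ¬ G.Adj x y ∧ ¬ G.Adj x z ∧ ¬ G.Adj y z

/-- `x` belongs to some independent set of size 3 of `G`. -/
def InInd3 (G : SimpleGraph V) (x : V) : Prop := ∃ y z, IsInd3 G x y z

/-- `G` is sunflower-reduced (for the parameter `k`). -/
def SunflowerReduced (G : SimpleGraph V) (k : ℕ) : Prop :=
  ∀ u v : V, u ≠ v → ¬ G.Adj u v →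
    {w : V | ∃ c, IsClaw G c u v w}.ncard ≤ k ∧
    {e : Sym2 V | ∃ a b, e = s(a, b) ∧ IsInducedC4 G u a v b}.ncard ≤ k

/-- `u` and `v` are true twins of `G`: they have the same closed neighborhood. -/
def TrueTwins (G : SimpleGraph V) (u v : V) : Prop :=
  insert u (G.neighborSet u) = insert v (G.neighborSet v)

/-- `b : Fin p → V` enumerates a `K`-join of `G` whose complement is
partitioned into `N`, `L`, `R`, `C`. -/
structure KJoinWith (G : SimpleGraph V) {p : ℕ} (b : Fin p → V)
    (N L R C : Set V) : Prop where
  inj : Function.Injective b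
  clique : ∀ i j : Fin p, i ≠ j → G.Adj (b i) (b j)
  cover : ∀ v : V, v ∉ Set.range b → v ∈ N ∪ L ∪ R ∪ C
  disj : List.Pairwise Disjoint [Set.range b, N, L, R, C]
  nAdj : ∀ v ∈ N, ∀ i, G.Adj v (b i)
  cNotAdj : ∀ v ∈ C, ∀ i, ¬ G.Adj v (b i)
  lrAdj : ∀ v ∈ L ∪ R, ∃ i, G.Adj v (b i)
  lrNotAll : ∀ v ∈ L ∪ R, ∃ i, ¬ G.Adj v (b i)
  rFirst : ∀ r ∈ R, ∀ i : Fin p, i.val = 0 → ¬ G.Adj r (b i)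
  lLast : ∀ x ∈ L, ∀ i : Fin p, i.val = p - 1 → ¬ G.Adj x (b i)
  rMono : ∀ i j : Fin p, i.val + 1 = j.val → ∀ r ∈ R, G.Adj (b i) r → G.Adj (b j) r
  lMono : ∀ i j : Fin p, i.val + 1 = j.val → ∀ x ∈ L, G.Adj (b j) x → G.Adj (b i) x

/-- `B ⊆ V` is a `K`-join of `G`. -/
def IsKJoin (G : SimpleGraph V) (B : Set V) : Prop :=
  ∃ (p : ℕ) (b : Fin p → V) (N L R C : Set V),
    Set.range b = B ∧ KJoinWith G b N L R C

/-- `B` is a clean `K`-join: none of its vertices belongs to a claw or an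
induced 4-cycle of `G`. -/
def IsCleanKJoin (G : SimpleGraph V) (B : Set V) : Prop :=
  IsKJoin G B ∧ ∀ x ∈ B, ¬ InClaw G x ∧ ¬ InC4 G x

/-- `B ⊆ V` is a simple `K`-join of `G` (one of `L`, `R` is empty). -/
def IsSimpleKJoin (G : SimpleGraph V) (B : Set V) : Prop :=
  ∃ (p : ℕ) (b : Fin p → V) (N L R C : Set V),
    Set.range b = B ∧ KJoinWith G b N L R C ∧ (L = ∅ ∨ R = ∅)

/-- `B` is bcc-clean: none of its vertices belongs to a `3K₁` or an induced
4-cycle of `G`. -/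
def IsBccClean (G : SimpleGraph V) (B : Set V) : Prop :=
  ∀ x ∈ B, ¬ InInd3 G x ∧ ¬ InC4 G x

/-- `b : Fin p → V` enumerates (in umbrella order) a 1-branch of `G` with
complement partitioned into `R`, `C`; `b l` is the neighbor of the last
vertex `b (p-1)` of minimal index.  The attachment clique is
`B₁ = {b i : l ≤ i}` and `B^R = {b i : i < l}`. -/
structure OneBranch (G : SimpleGraph V) {p : ℕ} (b : Fin p → V)
    (R C : Set V) (l : Fin p) : Prop where
  pos : 0 < p
  inj : Function.Injective b
  umbrella : ∀ i j m : Fin p, i < j → j < m → G.Adj (b i) (b m) →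
    G.Adj (b i) (b j) ∧ G.Adj (b j) (b m)
  connB : (G.induce (Set.range b)).Connected
  cover : ∀ v : V, v ∉ Set.range b → v ∈ R ∪ C
  disj : List.Pairwise Disjoint [Set.range b, R, C]
  noBC : ∀ v ∈ C, ∀ i, ¬ G.Adj v (b i)
  rNbr : ∀ v ∈ R, ∃ i, G.Adj v (b i)
  lMin : ∀ j : Fin p, j < l → ¬ G.Adj (b j) (b ⟨p - 1, Nat.sub_lt pos Nat.one_pos⟩)
  lNbr : l.val = p - 1 ∨ G.Adj (b l) (b ⟨p - 1, Nat.sub_lt pos Nat.one_pos⟩)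
  noEarlyR : ∀ j : Fin p, j < l → ∀ r ∈ R, ¬ G.Adj r (b j)
  rMono : ∀ i j : Fin p, l ≤ i → i.val + 1 = j.val → ∀ r ∈ R,
    G.Adj (b i) r → G.Adj (b j) r

/-- `b : Fin p → V` enumerates (in umbrella order) a 2-branch of `G` with
complement partitioned into `L`, `R`, `C`; `b l` is the neighbor of `b (p-1)`
of minimal index and `b l'` is the neighbor of `b 0` of maximal index.  The
attachment cliques are `B₁ = {b i : i ≤ l'}` and `B₂ = {b i : l ≤ i}`, and
`B^R = {b i : l' < i < l}`. -/
structure TwoBranch (G : SimpleGraph V) {p : ℕ} (b : Fin p → V)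
    (L R C : Set V) (l l' : Fin p) : Prop where
  pos : 0 < p
  inj : Function.Injective b
  umbrella : ∀ i j m : Fin p, i < j → j < m → G.Adj (b i) (b m) →
    G.Adj (b i) (b j) ∧ G.Adj (b j) (b m)
  connB : (G.induce (Set.range b)).Connected
  cover : ∀ v : V, v ∉ Set.range b → v ∈ L ∪ R ∪ C
  disj : List.Pairwise Disjoint [Set.range b, L, R, C]
  noBC : ∀ v ∈ C, ∀ i, ¬ G.Adj v (b i)
  lNbrEx : ∀ v ∈ L, ∃ i, G.Adj v (b i)
  rNbrEx : ∀ v ∈ R, ∃ i, G.Adj v (b i)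
  lMin : ∀ j : Fin p, j < l → ¬ G.Adj (b j) (b ⟨p - 1, Nat.sub_lt pos Nat.one_pos⟩)
  lNbr : l.val = p - 1 ∨ G.Adj (b l) (b ⟨p - 1, Nat.sub_lt pos Nat.one_pos⟩)
  lMax' : ∀ j : Fin p, l' < j → ¬ G.Adj (b ⟨0, pos⟩) (b j)
  lNbr' : l'.val = 0 ∨ G.Adj (b ⟨0, pos⟩) (b l')
  noEarlyR : ∀ j : Fin p, j < l → ∀ r ∈ R, ¬ G.Adj r (b j)
  noLateL : ∀ j : Fin p, l' < j → ∀ v ∈ L, ¬ G.Adj v (b j)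
  rMono : ∀ i j : Fin p, l ≤ i → i.val + 1 = j.val → ∀ r ∈ R,
    G.Adj (b i) r → G.Adj (b j) r
  lMono : ∀ i j : Fin p, j ≤ l' → i.val + 1 = j.val → ∀ v ∈ L,
    G.Adj (b j) v → G.Adj (b i) v

/-- `e : Fin q → Fin p` lists the last indices of the `q` K-joins of the
K-join decomposition of the 2-branch enumerated by `b` (with attachment
cliques ending at `l'` resp. starting at `l`). -/
def KJoinDecomp (G : SimpleGraph V) {p : ℕ} (b : Fin p → V) (l l' : Fin p)
    (q : ℕ) (e : Fin q → Fin p) : Prop :=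
  0 < q ∧
  (∀ i : Fin q, i.val = 0 → e i = l') ∧
  (∀ i : Fin q, i.val = q - 1 → (e i).val = p - 1) ∧
  StrictMono e ∧
  ∀ i j : Fin q, i.val + 1 = j.val →
    ∃ hs : (e i).val + 1 < p,
      (j.val + 1 < q →
        (⟨(e i).val + 1, hs⟩ : Fin p) < l ∧
        G.Adj (b ⟨(e i).val + 1, hs⟩) (b (e j)) ∧
        ∀ m : Fin p, G.Adj (b ⟨(e i).val + 1, hs⟩) (b m) → m ≤ e j) ∧
      (j.val + 1 = q → l ≤ (⟨(e i).val + 1, hs⟩ : Fin p))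

/-- `G` is a bi-clique chain graph: two cliques joined by a join. -/
def IsBicliqueChain (G : SimpleGraph V) : Prop :=
  ∃ (q : ℕ) (x : Fin q → V) (Y : Set V),
    Function.Injective x ∧
    Disjoint (Set.range x) Y ∧
    (∀ v : V, v ∈ Set.range x ∨ v ∈ Y) ∧
    (∀ i j : Fin q, i ≠ j → G.Adj (x i) (x j)) ∧
    G.IsClique Y ∧
    (∀ i j : Fin q, i ≤ j → ∀ y ∈ Y, G.Adj (x i) y → G.Adj (x j) y)

/-- `F` is a bcc-`k`-completion of `G`. -/
def IsBccKCompletion (G : SimpleGraph V) (k : ℕ) (F : Finset (Sym2 V)) : Prop :=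
  (∀ e ∈ F, ¬ e.IsDiag) ∧ (∀ e ∈ F, e ∉ G.edgeSet) ∧ F.card ≤ k ∧
    IsBicliqueChain (addEdges G F)

/-!
Bi-clique chain graphs are exactly the finite graphs without induced `3K₁`, `C₄` and `C₅`. A
completion restricts to every induced subgraph, which gives the forward direction. Conversely, a
completion of `G - M` is one of `G` with the vertices of `M` made universal; reversing `B` if
necessary, let `R = ∅`, so that `L ∪ C` is a clique and every vertex of `L` sees a prefix of `B`.
Take such a completion `F` minimising the total number of non-neighbours in `B` of the ends of
its pairs. A non-edge meets the clique `B` at most once, so one of the last `k + 1` vertices,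
`b l`, is untouched by `F` and serves as an anchor. An obstruction of `G + F` through some
`b i ∈ M` reduces to an induced `C₄` on `b i, u, v, w` with `u ∈ B ∪ N` and `v, w ∈ L ∪ C`;
giving `v` the intersection and `w` the union of their neighbourhoods then yields a lighter
completion. Hence `F` already completes `G`.
-/

lemma addEdges_adj (G : SimpleGraph V) (F : Finset (Sym2 V)) (u v : V) :
    (addEdges G F).Adj u v ↔ G.Adj u v ∨ (s(u, v) ∈ F ∧ u ≠ v) := by
  simp [addEdges, SimpleGraph.fromEdgeSet_adj]

lemma le_addEdges (G : SimpleGraph V) (F : Finset (Sym2 V)) : G ≤ addEdges G F :=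
  le_sup_left

lemma addEdges_adj_iff_of_forall_notMem {G : SimpleGraph V} {F : Finset (Sym2 V)} {m : V}
    (hm : ∀ e ∈ F, m ∉ e) {z : V} : (addEdges G F).Adj m z ↔ G.Adj m z := by
  rw [addEdges_adj]
  exact ⟨fun h => h.resolve_right fun h => hm _ h.1 (Sym2.mem_mk_left m z), .inl⟩

/-- A non-edge contains at most one vertex of a clique. -/
lemma exists_mem_forall_notMem_of_card_lt {G : SimpleGraph V} {s : Finset V}
    (hs : G.IsClique (s : Set V)) {F : Finset (Sym2 V)} (hF : ∀ e ∈ F, e ∉ G.edgeSet)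
    (hcard : F.card < s.card) : ∃ x ∈ s, ∀ e ∈ F, x ∉ e := by
  classical
  by_contra! hcover
  obtain ⟨x₀, -⟩ := Finset.card_pos.1 (by omega : 0 < s.card)
  have : Nonempty (Sym2 V) := ⟨s(x₀, x₀)⟩
  choose! f hfF hxf using hcover
  have hinj : Set.InjOn f s := by
    intro x hx y hy hxy
    by_contra hne
    have hmem : f y = s(x, y) := (Sym2.mem_and_mem_iff hne).1 ⟨hxy ▸ hxf x hx, hxf y hy⟩
    exact hF _ (hfF y hy) (hmem ▸ hs hx hy hne)
  have := Finset.card_le_card_of_injOn f hfF hinj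
  omega

/-! ### Obstructions -/

def IsInducedC5 (G : SimpleGraph V) (a b c d e : V) : Prop :=
  G.Adj a b ∧ G.Adj b c ∧ G.Adj c d ∧ G.Adj d e ∧ G.Adj e a ∧
    ¬ G.Adj a c ∧ ¬ G.Adj a d ∧ ¬ G.Adj b d ∧ ¬ G.Adj b e ∧ ¬ G.Adj c e ∧
    a ≠ c ∧ a ≠ d ∧ b ≠ d ∧ b ≠ e ∧ c ≠ e

def IsObstructionFree (G : SimpleGraph V) : Prop :=
  (∀ x y z, ¬ IsInd3 G x y z) ∧ (∀ a b c d, ¬ IsInducedC4 G a b c d) ∧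
    ∀ a b c d e, ¬ IsInducedC5 G a b c d e

def HasObstructionAt (G : SimpleGraph V) (x : V) : Prop :=
  (∃ y z, IsInd3 G x y z) ∨ (∃ b c d, IsInducedC4 G x b c d) ∨
    ∃ b c d e, IsInducedC5 G x b c d e

section Symmetries

variable {G : SimpleGraph V}

lemma IsInd3.rotate {x y z : V} (h : IsInd3 G x y z) : IsInd3 G y z x := by
  obtain ⟨d1, d2, d3, n1, n2, n3⟩ := h
  exact ⟨d3, d1.symm, d2.symm, n3, fun h => n1 h.symm, fun h => n2 h.symm⟩

lemma IsInducedC4.rotate {a b c d : V} (h : IsInducedC4 G a b c d) :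
    IsInducedC4 G b c d a := by
  obtain ⟨h1, h2, h3, h4, h5, h6, h7, h8⟩ := h
  exact ⟨h2, h3, h4, h1, h6, fun h => h5 h.symm, h8, h7.symm⟩

lemma IsInducedC4.reflect {a b c d : V} (h : IsInducedC4 G a b c d) :
    IsInducedC4 G a d c b := by
  obtain ⟨h1, h2, h3, h4, h5, h6, h7, h8⟩ := h
  exact ⟨h4.symm, h3.symm, h2.symm, h1.symm, h5, fun h => h6 h.symm, h7, h8.symm⟩

lemma IsInducedC5.rotate {a b c d e : V} (h : IsInducedC5 G a b c d e) :
    IsInducedC5 G b c d e a := by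
  obtain ⟨h1, h2, h3, h4, h5, n1, n2, n3, n4, n5, d1, d2, d3, d4, d5⟩ := h
  exact ⟨h2, h3, h4, h5, h1, n3, n4, n5, fun h => n1 h.symm, fun h => n2 h.symm,
    d3, d4, d5, d1.symm, d2.symm⟩

lemma IsInducedC5.reflect {a b c d e : V} (h : IsInducedC5 G a b c d e) :
    IsInducedC5 G a e d c b := by
  obtain ⟨h1, h2, h3, h4, h5, n1, n2, n3, n4, n5, d1, d2, d3, d4, d5⟩ := h
  exact ⟨h5.symm, h4.symm, h3.symm, h2.symm, h1.symm, n2, n1, fun h => n5 h.symm,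
    fun h => n4 h.symm, fun h => n3 h.symm, d2, d1, d5.symm, d4.symm, d3.symm⟩

end Symmetries

lemma IsObstructionFree.of_agree {G H : SimpleGraph V} (hG : IsObstructionFree G) (S : Set V)
    (hagree : ∀ a b, a ∉ S → b ∉ S → (H.Adj a b ↔ G.Adj a b))
    (hS : ∀ x ∈ S, ¬ HasObstructionAt H x) : IsObstructionFree H := by
  refine ⟨fun x y z h3 => ?_, fun a b c d h4 => ?_, fun a b c d e h5 => ?_⟩
  · by_cases hx : x ∈ S; · exact hS x hx (.inl ⟨y, z, h3⟩)
    by_cases hy : y ∈ S; · exact hS y hy (.inl ⟨z, x, h3.rotate⟩)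
    by_cases hz : z ∈ S; · exact hS z hz (.inl ⟨x, y, h3.rotate.rotate⟩)
    exact hG.1 x y z (by simpa only [IsInd3, hagree, hx, hy, hz, not_false_eq_true] using h3)
  · by_cases ha : a ∈ S; · exact hS a ha (.inr (.inl ⟨b, c, d, h4⟩))
    by_cases hb : b ∈ S; · exact hS b hb (.inr (.inl ⟨c, d, a, h4.rotate⟩))
    by_cases hc : c ∈ S; · exact hS c hc (.inr (.inl ⟨d, a, b, h4.rotate.rotate⟩))
    by_cases hd : d ∈ S; · exact hS d hd (.inr (.inl ⟨a, b, c, h4.rotate.rotate.rotate⟩))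
    exact hG.2.1 a b c d
      (by simpa only [IsInducedC4, hagree, ha, hb, hc, hd, not_false_eq_true] using h4)
  · by_cases ha : a ∈ S; · exact hS a ha (.inr (.inr ⟨b, c, d, e, h5⟩))
    by_cases hb : b ∈ S; · exact hS b hb (.inr (.inr ⟨c, d, e, a, h5.rotate⟩))
    by_cases hc : c ∈ S; · exact hS c hc (.inr (.inr ⟨d, e, a, b, h5.rotate.rotate⟩))
    by_cases hd : d ∈ S
    · exact hS d hd (.inr (.inr ⟨e, a, b, c, h5.rotate.rotate.rotate⟩))
    by_cases he : e ∈ S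
    · exact hS e he (.inr (.inr ⟨a, b, c, d, h5.rotate.rotate.rotate.rotate⟩))
    exact hG.2.2 a b c d e
      (by simpa only [IsInducedC5, hagree, ha, hb, hc, hd, he, not_false_eq_true] using h5)

/-! ### Bi-clique chain graphs are the obstruction-free graphs -/

lemma IsBicliqueChain.isObstructionFree {G : SimpleGraph V} (h : IsBicliqueChain G) :
    IsObstructionFree G := by
  obtain ⟨q, x, Y, -, -, hcover, hxcl, hYcl, hmono⟩ := h
  have opp : ∀ u v, u ≠ v → ¬ G.Adj u v → (u ∈ Y ↔ v ∉ Y) := by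
    intro u v huv hnadj
    refine ⟨fun hu hv => hnadj (hYcl hu hv huv), fun hv => ?_⟩
    by_contra hu
    obtain ⟨i, rfl⟩ := (hcover u).resolve_right hu
    obtain ⟨j, rfl⟩ := (hcover v).resolve_right hv
    exact hnadj (hxcl i j (fun hij => huv (congrArg x hij)))
  have noC4 : ∀ a b c d, a ∉ Y → b ∉ Y → c ∈ Y → d ∈ Y → ¬ IsInducedC4 G a b c d := by
    rintro a b c d ha hb hc hd ⟨-, hbc, -, hda, hac, hbd, -, -⟩
    obtain ⟨i, rfl⟩ := (hcover a).resolve_right ha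
    obtain ⟨j, rfl⟩ := (hcover b).resolve_right hb
    rcases le_total i j with hij | hji
    · exact hbd (hmono i j hij d hd hda.symm)
    · exact hac (hmono j i hji c hc hbc)
  refine ⟨?_, fun a b c d h4 => ?_, ?_⟩
  · rintro a b c ⟨d1, d2, d3, n1, n2, n3⟩
    have := opp a b d1 n1; have := opp a c d2 n2; have := opp b c d3 n3
    tauto
  · obtain ⟨-, -, -, -, hac, hbd, hac', hbd'⟩ := id h4
    have hac := opp a c hac' hac
    have hbd := opp b d hbd' hbd
    by_cases ha : a ∈ Y <;> by_cases hb : b ∈ Y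
    · exact noC4 c d a b (hac.1 ha) (hbd.1 hb) ha hb h4.rotate.rotate
    · exact noC4 b c d a hb (hac.1 ha) (by tauto) ha h4.rotate
    · exact noC4 d a b c (hbd.1 hb) ha hb (by tauto) h4.rotate.rotate.rotate
    · exact noC4 a b c d ha hb (by tauto) (by tauto) h4
  · rintro a b c d e ⟨-, -, -, -, -, n1, n2, n3, n4, n5, d1, d2, d3, d4, d5⟩
    have := opp a c d1 n1; have := opp a d d2 n2; have := opp b d d3 n3
    have := opp b e d4 n4; have := opp c e d5 n5
    tauto

lemma SimpleGraph.IsClique.forall_adj_imp_or {G : SimpleGraph V} {B : Set V}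
    (hB : G.IsClique B) (hC4 : ∀ a b c d, ¬ IsInducedC4 G a b c d) {a a' : V}
    (haa' : G.Adj a a') (ha : a ∉ B) (ha' : a' ∉ B) :
    (∀ y ∈ B, G.Adj a y → G.Adj a' y) ∨ ∀ y ∈ B, G.Adj a' y → G.Adj a y := by
  by_contra! ⟨⟨y, hy, hay, ha'y⟩, ⟨y', hy', ha'y', hay'⟩⟩
  have hne : y' ≠ y := by rintro rfl; exact ha'y ha'y'
  exact hC4 a a' y' y ⟨haa', ha'y', hB hy' hy hne, hay.symm, hay', ha'y,
    by rintro rfl; exact ha hy', by rintro rfl; exact ha' hy⟩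

/-- The neighbourhoods in `Aᶜ` of the vertices of `A` form a chain, so listing `A` by increasing
number of neighbours in `Aᶜ` orders these neighbourhoods by inclusion. -/
lemma isBicliqueChain_of_isClique_compl [Fintype V] {G : SimpleGraph V} {A : Finset V}
    (hA : G.IsClique (A : Set V)) (hB : G.IsClique (A : Set V)ᶜ)
    (hC4 : ∀ a b c d, ¬ IsInducedC4 G a b c d) : IsBicliqueChain G := by
  classical
  set nbr : V → Finset V := fun a => {y | y ∉ A ∧ G.Adj a y} with hnbr
  set l := A.toList.mergeSort (fun a a' => decide ((nbr a).card ≤ (nbr a').card))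
  have hsorted : l.Pairwise (fun a a' => (nbr a).card ≤ (nbr a').card) := by
    simpa using List.pairwise_mergeSort
      (le := fun a a' => decide ((nbr a).card ≤ (nbr a').card))
      (fun a b c h₁ h₂ => by simp only [decide_eq_true_eq] at *; omega)
      (fun a b => by simpa using le_total _ _) A.toList
  have hmem : ∀ z, z ∈ l ↔ z ∈ A := by
    simp [l, (List.mergeSort_perm _ _).mem_iff]
  have hinj : Function.Injective l.get :=
    List.nodup_iff_injective_get.1 ((List.mergeSort_perm _ _).nodup_iff.2 A.nodup_toList)
  have hgetA : ∀ i, l.get i ∈ A := fun i => (hmem _).1 (List.get_mem l i)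
  refine ⟨l.length, l.get, (A : Set V)ᶜ, hinj, ?_, fun v => ?_,
    fun i j hij => hA (hgetA i) (hgetA j) (hinj.ne hij), hB, fun i j hij y hy hiy => ?_⟩
  · exact Set.disjoint_left.2 (by rintro _ ⟨i, rfl⟩; simpa using hgetA i)
  · by_cases hv : v ∈ A
    · exact .inl (List.mem_iff_get.1 ((hmem v).2 hv))
    · exact .inr hv
  rcases hij.lt_or_eq with hlt | rfl
  · have hcard := hsorted.rel_get_of_lt hlt
    have hy' : y ∉ A := hy
    have hne : l.get i ≠ l.get j := hinj.ne hlt.ne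
    rcases hB.forall_adj_imp_or hC4 (hA (hgetA i) (hgetA j) hne) (not_not.2 (hgetA i))
      (not_not.2 (hgetA j)) with hsub | hsup
    · exact hsub y hy hiy
    · have hsub : nbr (l.get j) ⊆ nbr (l.get i) := fun z hz => by
        simp only [hnbr, Finset.mem_filter, Finset.mem_univ, true_and] at hz ⊢
        exact ⟨hz.1, hsup z hz.1 hz.2⟩
      have heq := Finset.eq_of_subset_of_card_le hsub hcard
      have hy_mem : y ∈ nbr (l.get i) := Finset.mem_filter.2 ⟨Finset.mem_univ _, hy', hiy⟩
      rw [← heq] at hy_mem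
      exact (Finset.mem_filter.1 hy_mem).2.2
  · exact hiy

section CliquePartition

variable [Fintype V] [DecidableEq V] {G : SimpleGraph V} [DecidableRel G.Adj]

lemma IsObstructionFree.isClique_neighborFinset_compl (hG : IsObstructionFree G) (v : V) :
    G.IsClique (Gᶜ.neighborFinset v : Set V) := by
  intro a₁ h₁ a₂ h₂ hne
  by_contra hn
  simp only [Finset.mem_coe, mem_neighborFinset, compl_adj] at h₁ h₂
  exact hG.1 v a₁ a₂ ⟨h₁.1, h₂.1, hne, h₁.2, h₂.2, hn⟩

/-- Two non-adjacent `b₁, b₂` outside the non-neighbourhood `A` of `v₀` split `A` (a common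
neighbour gives a `C₄` through `v₀`, a common non-neighbour a `3K₁`); the split either yields a
`C₅` through `v₀` or gives `b₁` or `b₂` more non-neighbours than `v₀`. -/
lemma IsObstructionFree.isClique_compl_neighborFinset_compl (hG : IsObstructionFree G)
    {v₀ : V} (hmax : ∀ v, Gᶜ.degree v ≤ Gᶜ.degree v₀) :
    G.IsClique (Gᶜ.neighborFinset v₀ : Set V)ᶜ := by
  set A := Gᶜ.neighborFinset v₀
  have memA : ∀ z, z ∈ A ↔ v₀ ≠ z ∧ ¬ G.Adj v₀ z := by simp [A]
  have hA := hG.isClique_neighborFinset_compl v₀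
  have crowded : ∀ b b', b ∉ A → b' ∉ A → b ≠ b' → ¬ G.Adj b b' →
      (∀ a ∈ A, ¬ G.Adj a b') → False := by
    intro b b' hb hb' hne hn hA'
    have hsub : insert b A ⊆ Gᶜ.neighborFinset b' := by
      intro z hz
      rw [mem_neighborFinset, compl_adj]
      rcases Finset.mem_insert.1 hz with rfl | hz
      · exact ⟨hne.symm, fun h => hn h.symm⟩
      · exact ⟨fun h => hb' (h ▸ hz), fun h => hA' z hz h.symm⟩
    have := Finset.card_le_card hsub
    rw [Finset.card_insert_of_notMem hb] at this
    simp only [card_neighborFinset_eq_degree] at this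
    have := hmax b'
    have : A.card = Gᶜ.degree v₀ := card_neighborFinset_eq_degree _ _
    omega
  intro b₁ h₁ b₂ h₂ hne
  by_contra hn
  replace h₁ : b₁ ∉ A := h₁
  replace h₂ : b₂ ∉ A := h₂
  have adj₀ : ∀ b ∉ A, b ≠ v₀ → G.Adj v₀ b := fun b hb hne => by
    by_contra h; exact hb ((memA b).2 ⟨hne.symm, h⟩)
  have ne_of_mem : ∀ a ∈ A, ∀ b ∉ A, a ≠ b := by rintro a ha b hb rfl; exact hb ha
  have hne₁ : b₁ ≠ v₀ := by rintro rfl; exact h₂ ((memA b₂).2 ⟨hne, hn⟩)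
  have hne₂ : b₂ ≠ v₀ := by rintro rfl; exact h₁ ((memA b₁).2 ⟨hne.symm, fun h => hn h.symm⟩)
  have split : ∀ a ∈ A, G.Adj a b₁ → ¬ G.Adj a b₂ := fun a ha h₁' h₂' =>
    hG.2.1 v₀ b₁ a b₂ ⟨adj₀ b₁ h₁ hne₁, h₁'.symm, h₂', (adj₀ b₂ h₂ hne₂).symm,
      ((memA a).1 ha).2, hn, ((memA a).1 ha).1, hne⟩
  obtain ⟨a₂, ha₂, h₂₁⟩ : ∃ a ∈ A, G.Adj a b₁ := by
    by_contra! h; exact crowded b₂ b₁ h₂ h₁ hne.symm (fun h => hn h.symm) h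
  obtain ⟨a₀, ha₀, h₀₂⟩ : ∃ a ∈ A, G.Adj a b₂ := by
    by_contra! h; exact crowded b₁ b₂ h₁ h₂ hne hn h
  have h₀₁ : ¬ G.Adj a₀ b₁ := fun h => split a₀ ha₀ h h₀₂
  have ha₂₀ : a₂ ≠ a₀ := by rintro rfl; exact h₀₁ h₂₁
  exact hG.2.2 v₀ b₁ a₂ a₀ b₂ ⟨adj₀ b₁ h₁ hne₁, h₂₁.symm, hA ha₂ ha₀ ha₂₀, h₀₂,
    (adj₀ b₂ h₂ hne₂).symm, ((memA a₂).1 ha₂).2, ((memA a₀).1 ha₀).2,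
    fun h => h₀₁ h.symm, hn, split a₂ ha₂ h₂₁, ((memA a₂).1 ha₂).1,
    ((memA a₀).1 ha₀).1, (ne_of_mem a₀ ha₀ b₁ h₁).symm, hne, ne_of_mem a₂ ha₂ b₂ h₂⟩

end CliquePartition

lemma IsObstructionFree.isBicliqueChain [Finite V] {G : SimpleGraph V}
    (hG : IsObstructionFree G) : IsBicliqueChain G := by
  classical
  have := Fintype.ofFinite V
  rcases isEmpty_or_nonempty V with hV | hV
  · exact isBicliqueChain_of_isClique_compl (A := ∅) (by simp) (fun x => isEmptyElim x)
      hG.2.1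
  obtain ⟨v₀, -, hmax⟩ := Finset.exists_max_image Finset.univ (Gᶜ.degree ·) Finset.univ_nonempty
  exact isBicliqueChain_of_isClique_compl (hG.isClique_neighborFinset_compl v₀)
    (hG.isClique_compl_neighborFinset_compl fun v => hmax v (Finset.mem_univ v)) hG.2.1

lemma isBicliqueChain_iff_isObstructionFree [Finite V] {G : SimpleGraph V} :
    IsBicliqueChain G ↔ IsObstructionFree G :=
  ⟨IsBicliqueChain.isObstructionFree, IsObstructionFree.isBicliqueChain⟩

/-! ### Induced subgraphs and universal vertices -/

section Induce

variable {G : SimpleGraph V}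

lemma IsBicliqueChain.induce (h : IsBicliqueChain G) (s : Set V) :
    IsBicliqueChain (G.induce s) := by
  classical
  obtain ⟨q, x, Y, hinj, hdisj, hcover, hxcl, hYcl, hmono⟩ := h
  set T : Finset (Fin q) := {i | x i ∈ s}
  set ι := T.orderEmbOfFin rfl
  have hιT : ∀ i, ι i ∈ T := T.orderEmbOfFin_mem rfl
  have hxs : ∀ i, x (ι i) ∈ s := fun i => (Finset.mem_filter.1 (hιT i)).2
  refine ⟨T.card, fun i => ⟨x (ι i), hxs i⟩, {a | (a : V) ∈ Y}, fun i j hij => ?_, ?_,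
    fun ⟨v, hv⟩ => ?_, fun i j hij => hxcl _ _ (ι.injective.ne hij), fun a ha c hc hne => ?_,
    fun i j hij y hy hadj => hmono _ _ (ι.monotone hij) y hy hadj⟩
  · exact ι.injective (hinj (congrArg Subtype.val hij))
  · exact Set.disjoint_left.2 fun a ⟨i, hi⟩ ha =>
      Set.disjoint_left.1 hdisj ⟨ι i, congrArg Subtype.val hi⟩ ha
  · rcases hcover v with ⟨i, rfl⟩ | hY
    · have hiT : i ∈ T := Finset.mem_filter.2 ⟨Finset.mem_univ _, hv⟩
      obtain ⟨j, hj⟩ : i ∈ Set.range ι := by rwa [Finset.range_orderEmbOfFin]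
      exact .inl ⟨j, Subtype.ext (congrArg x hj)⟩
    · exact .inr hY
  · exact hYcl ha hc (Subtype.coe_injective.ne hne)

lemma induce_addEdges {s : Set V} {F : Finset (Sym2 V)} {F₀ : Finset (Sym2 s)}
    (hF : ∀ e, e ∈ F₀ ↔ e.map Subtype.val ∈ F) :
    (addEdges G F).induce s = addEdges (G.induce s) F₀ := by
  ext a c
  simp [addEdges_adj, hF, Subtype.ext_iff]

lemma IsBccKCompletion.exists_induce {k : ℕ} {F : Finset (Sym2 V)}
    (hF : IsBccKCompletion G k F) (s : Set V) :
    ∃ F₀, IsBccKCompletion (G.induce s) k F₀ := by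
  classical
  obtain ⟨hdiag, hnonedge, hcard, hchain⟩ := hF
  have hinj : Function.Injective (Sym2.map (Subtype.val : s → V)) :=
    Sym2.map.injective Subtype.val_injective
  set F₀ := F.preimage _ hinj.injOn
  refine ⟨F₀, fun e he hd => hdiag _ (Finset.mem_preimage.1 he) hd.map, fun e he hmem => ?_,
    (Finset.card_le_card_of_injOn _ (fun e he => Finset.mem_preimage.1 he) hinj.injOn).trans
      hcard, ?_⟩
  · refine hnonedge _ (Finset.mem_preimage.1 he) ?_
    induction e with
    | _ a c => simpa using hmem
  · rw [← induce_addEdges fun e => Finset.mem_preimage]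
    exact hchain.induce s

end Induce

section Universal

def addUniversal (G : SimpleGraph V) (M : Set V) : SimpleGraph V :=
  G ⊔ SimpleGraph.fromRel fun u _ => u ∈ M

variable {G : SimpleGraph V} {M : Set V}

lemma addUniversal_adj {u v : V} :
    (addUniversal G M).Adj u v ↔ G.Adj u v ∨ (u ≠ v ∧ (u ∈ M ∨ v ∈ M)) := by
  simp [addUniversal]

lemma le_addUniversal : G ≤ addUniversal G M := le_sup_left

lemma le_addEdges_addUniversal {F : Finset (Sym2 V)} : G ≤ addEdges (addUniversal G M) F :=
  le_addUniversal.trans (le_addEdges _ _)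

lemma addUniversal_adj_of_mem {u v : V} (hu : u ∈ M) (hne : u ≠ v) :
    (addUniversal G M).Adj u v :=
  addUniversal_adj.2 (.inr ⟨hne, .inl hu⟩)

lemma addUniversal_adj_of_notMem {u v : V} (hu : u ∉ M) (hv : v ∉ M) :
    (addUniversal G M).Adj u v ↔ G.Adj u v := by
  simp [addUniversal_adj, hu, hv]

lemma induce_addUniversal : (addUniversal G M).induce {v | v ∉ M} = G.induce {v | v ∉ M} := by
  ext a c
  exact addUniversal_adj_of_notMem a.2 c.2

lemma IsBicliqueChain.of_induce_compl (h : IsBicliqueChain (G.induce {v | v ∉ M}))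
    (hM : ∀ m ∈ M, ∀ v, m ≠ v → G.Adj m v) : IsBicliqueChain G := by
  obtain ⟨q, x, Y, hinj, hdisj, hcover, hxcl, hYcl, hmono⟩ := h
  refine ⟨q, fun i => x i, Subtype.val '' Y ∪ M, fun i j hij => hinj (Subtype.ext hij), ?_,
    fun v => ?_, hxcl, ?_, fun i j hij y hy hadj => ?_⟩
  · refine Set.disjoint_left.2 ?_
    rintro _ ⟨i, rfl⟩ (⟨y, hy, hxy⟩ | hM')
    · exact Set.disjoint_left.1 hdisj ⟨i, rfl⟩ (Subtype.ext hxy ▸ hy)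
    · exact (x i).2 hM'
  · by_cases hv : v ∈ M
    · exact .inr (.inr hv)
    rcases hcover ⟨v, hv⟩ with ⟨i, hi⟩ | hY
    · exact .inl ⟨i, congrArg Subtype.val hi⟩
    · exact .inr (.inl ⟨_, hY, rfl⟩)
  · rintro _ (⟨a, ha, rfl⟩ | ha) _ (⟨c, hc, rfl⟩ | hc) hne
    · exact hYcl ha hc (fun h => hne (congrArg Subtype.val h))
    · exact (hM _ hc _ (Ne.symm hne)).symm
    all_goals exact hM _ ha _ hne
  · rcases hy with ⟨y, hy, rfl⟩ | hy
    · exact hmono i j hij y hy hadj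
    · exact (hM y hy _ (by rintro rfl; exact (x j).2 hy)).symm

lemma exists_bccKCompletion_addUniversal {k : ℕ} {F₀ : Finset (Sym2 ({v | v ∉ M} : Set V))}
    (hF₀ : IsBccKCompletion (G.induce {v | v ∉ M}) k F₀) :
    ∃ F, IsBccKCompletion (addUniversal G M) k F := by
  obtain ⟨hdiag, hnonedge, hcard, hchain⟩ := hF₀
  set ι : Sym2 ({v | v ∉ M} : Set V) ↪ Sym2 V := ⟨Sym2.map Subtype.val,
    Sym2.map.injective Subtype.val_injective⟩
  refine ⟨F₀.map ι, ?_, ?_, by rwa [Finset.card_map], ?_⟩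
  · simp only [Finset.mem_map]
    rintro _ ⟨e, he, rfl⟩ hd
    exact hdiag e he ((Sym2.isDiag_map Subtype.val_injective).1 hd)
  · simp only [Finset.mem_map]
    rintro _ ⟨e, he, rfl⟩ hmem
    refine hnonedge e he ?_
    induction e with
    | _ a c => exact (addUniversal_adj_of_notMem a.2 c.2).1 hmem
  · refine IsBicliqueChain.of_induce_compl ?_ fun m hm v hne =>
      le_addEdges _ _ (addUniversal_adj_of_mem hm hne)
    rwa [induce_addEdges (F₀ := F₀) fun e => (Finset.mem_map' ι).symm, induce_addUniversal]

lemma notMem_of_mem_addUniversal {F : Finset (Sym2 V)} (hdiag : ∀ e ∈ F, ¬ e.IsDiag)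
    (hF : ∀ e ∈ F, e ∉ (addUniversal G M).edgeSet) {e : Sym2 V} (he : e ∈ F) {m : V}
    (hm : m ∈ M) : m ∉ e := by
  induction e with
  | _ a c =>
    have hac : a ≠ c := fun h => hdiag _ he (Sym2.mk_isDiag_iff.2 h)
    intro hme
    rcases Sym2.mem_iff.1 hme with rfl | rfl
    · exact hF _ he (addUniversal_adj_of_mem hm hac)
    · exact hF _ he (addUniversal_adj_of_mem hm hac.symm).symm

lemma addEdges_addUniversal_adj_of_notMem {F : Finset (Sym2 V)} {a c : V} (ha : a ∉ M)
    (hc : c ∉ M) :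
    (addEdges (addUniversal G M) F).Adj a c ↔ (addEdges G F).Adj a c := by
  rw [addEdges_adj, addEdges_adj, addUniversal_adj_of_notMem ha hc]

end Universal

/-! ### The min-max swap -/

section MinMaxSwap

/-- `v` keeps only the common neighbours of `v` and `w`, while `w` gets all of them. -/
def minMaxSwap (H : SimpleGraph V) (v w : V) : SimpleGraph V :=
  SimpleGraph.fromRel fun a c =>
    (a = v ∧ c = w) ∨
      (a ≠ v ∧ a ≠ w ∧
        ((c ≠ v ∧ c ≠ w ∧ H.Adj a c) ∨ (c = v ∧ H.Adj a v ∧ H.Adj a w) ∨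
          (c = w ∧ (H.Adj a v ∨ H.Adj a w))))

variable {H : SimpleGraph V} {v w a c : V}

lemma minMaxSwap_adj_of_ne (ha : a ≠ v) (ha' : a ≠ w) (hc : c ≠ v) (hc' : c ≠ w) :
    (minMaxSwap H v w).Adj a c ↔ H.Adj a c := by
  simp only [minMaxSwap, fromRel_adj]
  refine ⟨fun h => ?_, fun h => ⟨h.ne, .inl (.inr ⟨ha, ha', .inl ⟨hc, hc', h⟩⟩)⟩⟩
  rcases h with ⟨-, h | h⟩
  · aesop
  · aesop (add safe SimpleGraph.Adj.symm)

lemma minMaxSwap_adj_left (ha : a ≠ v) (ha' : a ≠ w) :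
    (minMaxSwap H v w).Adj a v ↔ H.Adj a v ∧ H.Adj a w := by
  simp only [minMaxSwap, fromRel_adj]
  aesop

lemma minMaxSwap_adj_right (ha : a ≠ v) (ha' : a ≠ w) :
    (minMaxSwap H v w).Adj a w ↔ H.Adj a v ∨ H.Adj a w := by
  simp only [minMaxSwap, fromRel_adj]
  aesop

lemma minMaxSwap_adj_self (hvw : v ≠ w) : (minMaxSwap H v w).Adj v w := by
  simp [minMaxSwap, hvw]

lemma minMaxSwap_adj_right_of_adj_left (hc : c ≠ w) (h : (minMaxSwap H v w).Adj c v) :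
    (minMaxSwap H v w).Adj c w := by
  have hc' : c ≠ v := h.ne
  exact (minMaxSwap_adj_right hc' hc).2 (.inl ((minMaxSwap_adj_left hc' hc).1 h).1)

def PrivateNeighborsJoined (H : SimpleGraph V) (v w : V) : Prop :=
  ∀ z₁ z₂, z₁ ≠ w → z₂ ≠ v → H.Adj z₁ v → ¬ H.Adj z₁ w → H.Adj z₂ w → ¬ H.Adj z₂ v →
    H.Adj z₁ z₂

local notation "H₂" => minMaxSwap H v w

lemma IsObstructionFree.minMaxSwap_not_isInd3_left (hOb : IsObstructionFree H)
    (hvw : H.Adj v w) (hjoin : PrivateNeighborsJoined H v w) {y z : V}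
    (h : IsInd3 H₂ v y z) : False := by
  obtain ⟨hvy, hvz, hyz, nvy, nvz, nyz⟩ := h
  have hyw : y ≠ w := by rintro rfl; exact nvy (minMaxSwap_adj_self hvw.ne)
  have hzw : z ≠ w := by rintro rfl; exact nvz (minMaxSwap_adj_self hvw.ne)
  rw [adj_comm, minMaxSwap_adj_left hvy.symm hyw] at nvy
  rw [adj_comm, minMaxSwap_adj_left hvz.symm hzw] at nvz
  rw [minMaxSwap_adj_of_ne hvy.symm hyw hvz.symm hzw] at nyz
  by_cases hyv : H.Adj y v <;> by_cases hzv : H.Adj z v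
  · exact hOb.1 w y z ⟨hyw.symm, hzw.symm, hyz, fun h => nvy ⟨hyv, h.symm⟩,
      fun h => nvz ⟨hzv, h.symm⟩, nyz⟩
  · by_cases hzw' : H.Adj z w
    · exact nyz (hjoin y z hyw hvz.symm hyv (fun h => nvy ⟨hyv, h⟩) hzw' hzv)
    · exact hOb.1 w y z ⟨hyw.symm, hzw.symm, hyz, fun h => nvy ⟨hyv, h.symm⟩,
        fun h => hzw' h.symm, nyz⟩
  · by_cases hyw' : H.Adj y w
    · exact nyz (hjoin z y hzw hvy.symm hzv (fun h => nvz ⟨hzv, h⟩) hyw' hyv).symm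
    · exact hOb.1 w y z ⟨hyw.symm, hzw.symm, hyz, fun h => hyw' h.symm,
        fun h => nvz ⟨hzv, h.symm⟩, nyz⟩
  · exact hOb.1 v y z ⟨hvy, hvz, hyz, fun h => hyv h.symm, fun h => hzv h.symm, nyz⟩

lemma IsObstructionFree.minMaxSwap_not_isInd3_right (hOb : IsObstructionFree H)
    (hvw : H.Adj v w) {y z : V} (h : IsInd3 H₂ w y z) : False := by
  obtain ⟨hwy, hwz, hyz, nwy, nwz, nyz⟩ := h
  have hyv : y ≠ v := by rintro rfl; exact nwy (minMaxSwap_adj_self hvw.ne).symm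
  have hzv : z ≠ v := by rintro rfl; exact nwz (minMaxSwap_adj_self hvw.ne).symm
  rw [adj_comm, minMaxSwap_adj_right hyv hwy.symm] at nwy
  rw [adj_comm, minMaxSwap_adj_right hzv hwz.symm] at nwz
  rw [minMaxSwap_adj_of_ne hyv hwy.symm hzv hwz.symm] at nyz
  exact hOb.1 w y z ⟨hwy, hwz, hyz, fun h => nwy (.inr h.symm), fun h => nwz (.inr h.symm), nyz⟩

lemma IsObstructionFree.minMaxSwap_not_isInducedC4_left (hOb : IsObstructionFree H)
    {b c d : V} (hbw : b ≠ w) (hcw : c ≠ w) (hdw : d ≠ w) (h : IsInducedC4 H₂ v b c d) :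
    False := by
  obtain ⟨e1, e2, e3, e4, n1, n2, hvc, hbd⟩ := h
  have hbv : b ≠ v := e1.ne.symm
  have hdv : d ≠ v := e4.ne
  rw [adj_comm, minMaxSwap_adj_left hbv hbw] at e1
  rw [minMaxSwap_adj_left hdv hdw] at e4
  rw [adj_comm, minMaxSwap_adj_left hvc.symm hcw] at n1
  rw [minMaxSwap_adj_of_ne hbv hbw hvc.symm hcw] at e2
  rw [minMaxSwap_adj_of_ne hvc.symm hcw hdv hdw] at e3
  rw [minMaxSwap_adj_of_ne hbv hbw hdv hdw] at n2
  by_cases hcv : H.Adj c v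
  · exact hOb.2.1 w b c d ⟨e1.2.symm, e2, e3, e4.2, fun h => n1 ⟨hcv, h.symm⟩, n2, hcw.symm, hbd⟩
  · exact hOb.2.1 v b c d ⟨e1.1.symm, e2, e3, e4.1, fun h => hcv h.symm, n2, hvc, hbd⟩

lemma IsObstructionFree.minMaxSwap_not_isInducedC4_right (hOb : IsObstructionFree H)
    (hvw : H.Adj v w) {b c d : V} (hbv : b ≠ v) (hcv : c ≠ v) (hdv : d ≠ v)
    (h : IsInducedC4 H₂ w b c d) : False := by
  obtain ⟨e1, e2, e3, e4, n1, n2, hwc, hbd⟩ := h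
  have hbw : b ≠ w := e1.ne.symm
  have hdw : d ≠ w := e4.ne
  rw [adj_comm, minMaxSwap_adj_right hbv hbw] at e1
  rw [minMaxSwap_adj_right hdv hdw] at e4
  rw [adj_comm, minMaxSwap_adj_right hcv hwc.symm, not_or] at n1
  rw [minMaxSwap_adj_of_ne hbv hbw hcv hwc.symm] at e2
  rw [minMaxSwap_adj_of_ne hcv hwc.symm hdv hdw] at e3
  rw [minMaxSwap_adj_of_ne hbv hbw hdv hdw] at n2
  have c4 : ∀ x, x ≠ c → H.Adj b x → H.Adj d x → ¬ H.Adj c x → False := fun x hxc hb hd hc =>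
    hOb.2.1 x b c d ⟨hb.symm, e2, e3, hd, fun h => hc h.symm, n2, hxc, hbd⟩
  by_cases hv : H.Adj b v ∧ H.Adj d v
  · exact c4 v hcv.symm hv.1 hv.2 n1.1
  by_cases hw : H.Adj b w ∧ H.Adj d w
  · exact c4 w hwc hw.1 hw.2 n1.2
  rcases e1 with hb | hb <;> rcases e4 with hd | hd
  · exact hv ⟨hb, hd⟩
  · exact hOb.2.2 v b c d w ⟨hb.symm, e2, e3, hd, hvw.symm, fun h => n1.1 h.symm,
      fun h => hv ⟨hb, h.symm⟩, n2, fun h => hw ⟨h, hd⟩, n1.2, hcv.symm, hdv.symm, hbd, hbw,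
      hwc.symm⟩
  · exact hOb.2.2 v d c b w ⟨hd.symm, e3.symm, e2.symm, hb, hvw.symm, fun h => n1.1 h.symm,
      fun h => hv ⟨h.symm, hd⟩, fun h => n2 h.symm, fun h => hw ⟨hb, h⟩, n1.2, hcv.symm,
      hbv.symm, hbd.symm, hdw, hwc.symm⟩
  · exact hw ⟨hb, hd⟩

lemma IsObstructionFree.minMaxSwap_not_isInducedC5_left (hOb : IsObstructionFree H)
    (hvw : H.Adj v w) {c₁ c₂ c₃ c₄ : V} (h₁ : c₁ ≠ w) (h₂ : c₂ ≠ w) (h₃ : c₃ ≠ w)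
    (h₄ : c₄ ≠ w) (h : IsInducedC5 H₂ v c₁ c₂ c₃ c₄) : False := by
  obtain ⟨e₁, e₂, e₃, e₄, e₅, n₁, n₂, n₃, n₄, n₅, d₁, d₂, d₃, d₄, d₅⟩ := h
  have h₁' : c₁ ≠ v := e₁.ne.symm
  have h₄' : c₄ ≠ v := e₅.ne
  rw [adj_comm, minMaxSwap_adj_left h₁' h₁] at e₁
  rw [minMaxSwap_adj_left h₄' h₄] at e₅
  rw [adj_comm, minMaxSwap_adj_left d₁.symm h₂] at n₁
  rw [adj_comm, minMaxSwap_adj_left d₂.symm h₃] at n₂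
  rw [minMaxSwap_adj_of_ne h₁' h₁ d₁.symm h₂] at e₂
  rw [minMaxSwap_adj_of_ne d₁.symm h₂ d₂.symm h₃] at e₃
  rw [minMaxSwap_adj_of_ne d₂.symm h₃ h₄' h₄] at e₄
  rw [minMaxSwap_adj_of_ne h₁' h₁ d₂.symm h₃] at n₃
  rw [minMaxSwap_adj_of_ne h₁' h₁ h₄' h₄] at n₄
  rw [minMaxSwap_adj_of_ne d₁.symm h₂ h₄' h₄] at n₅
  have c₅ : ∀ x, x ≠ c₂ → x ≠ c₃ → H.Adj c₁ x → H.Adj c₄ x → ¬ H.Adj c₂ x →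
      ¬ H.Adj c₃ x → False := fun x hx₂ hx₃ hc₁ hc₄ hc₂ hc₃ =>
    hOb.2.2 x c₁ c₂ c₃ c₄ ⟨hc₁.symm, e₂, e₃, e₄, hc₄, fun h => hc₂ h.symm,
      fun h => hc₃ h.symm, n₃, n₄, n₅, hx₂, hx₃, d₃, d₄, d₅⟩
  by_cases h₂v : H.Adj c₂ v <;> by_cases h₃v : H.Adj c₃ v
  · exact c₅ w h₂.symm h₃.symm e₁.2 e₅.2 (fun h => n₁ ⟨h₂v, h⟩) (fun h => n₂ ⟨h₃v, h⟩)
  · by_cases h₃w : H.Adj c₃ w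
    · exact hOb.2.1 v c₂ c₃ w ⟨h₂v.symm, e₃, h₃w, hvw.symm, fun h => h₃v h.symm,
        fun h => n₁ ⟨h₂v, h⟩, d₂, h₂⟩
    · exact c₅ w h₂.symm h₃.symm e₁.2 e₅.2 (fun h => n₁ ⟨h₂v, h⟩) h₃w
  · by_cases h₂w : H.Adj c₂ w
    · exact hOb.2.1 v c₃ c₂ w ⟨h₃v.symm, e₃.symm, h₂w, hvw.symm, fun h => h₂v h.symm,
        fun h => n₂ ⟨h₃v, h⟩, d₁, h₃⟩
    · exact c₅ w h₂.symm h₃.symm e₁.2 e₅.2 h₂w (fun h => n₂ ⟨h₃v, h⟩)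
  · exact c₅ v d₁ d₂ e₁.1 e₅.1 h₂v h₃v

lemma IsObstructionFree.minMaxSwap_not_isInducedC5_right (hOb : IsObstructionFree H)
    {c₁ c₂ c₃ c₄ : V} (h₁ : c₁ ≠ v) (h₂ : c₂ ≠ v) (h₃ : c₃ ≠ v) (h₄ : c₄ ≠ v)
    (h : IsInducedC5 H₂ w c₁ c₂ c₃ c₄) : False := by
  obtain ⟨e₁, e₂, e₃, e₄, e₅, n₁, n₂, n₃, n₄, n₅, d₁, d₂, d₃, d₄, d₅⟩ := h
  have h₁' : c₁ ≠ w := e₁.ne.symm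
  have h₄' : c₄ ≠ w := e₅.ne
  rw [adj_comm, minMaxSwap_adj_right h₂ d₁.symm, not_or] at n₁
  rw [adj_comm, minMaxSwap_adj_right h₃ d₂.symm, not_or] at n₂
  rw [minMaxSwap_adj_of_ne h₁ h₁' h₂ d₁.symm] at e₂
  rw [minMaxSwap_adj_of_ne h₂ d₁.symm h₃ d₂.symm] at e₃
  rw [minMaxSwap_adj_of_ne h₃ d₂.symm h₄ h₄'] at e₄
  rw [minMaxSwap_adj_of_ne h₁ h₁' h₃ d₂.symm] at n₃
  rw [minMaxSwap_adj_of_ne h₁ h₁' h₄ h₄'] at n₄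
  rw [minMaxSwap_adj_of_ne h₂ d₁.symm h₄ h₄'] at n₅
  by_cases h₄v : H.Adj c₄ v
  · by_cases h₁v : H.Adj c₁ v
    · exact hOb.2.2 v c₁ c₂ c₃ c₄ ⟨h₁v.symm, e₂, e₃, e₄, h₄v, fun h => n₁.1 h.symm,
        fun h => n₂.1 h.symm, n₃, n₄, n₅, h₂.symm, h₃.symm, d₃, d₄, d₅⟩
    · exact hOb.1 v c₃ c₁ ⟨h₃.symm, h₁.symm, d₃.symm, fun h => n₂.1 h.symm,
        fun h => h₁v h.symm, fun h => n₃ h.symm⟩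
  · exact hOb.1 v c₂ c₄ ⟨h₂.symm, h₄.symm, d₅, fun h => n₁.1 h.symm, fun h => h₄v h.symm, n₅⟩

lemma IsObstructionFree.minMaxSwap_not_hasObstructionAt_left (hOb : IsObstructionFree H)
    (hvw : H.Adj v w) (hjoin : PrivateNeighborsJoined H v w) : ¬ HasObstructionAt H₂ v := by
  have hvw₂ : (H₂).Adj v w := minMaxSwap_adj_self hvw.ne
  rintro (⟨y, z, h⟩ | ⟨b, c, d, h⟩ | ⟨c₁, c₂, c₃, c₄, h⟩)
  · exact hOb.minMaxSwap_not_isInd3_left hvw hjoin h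
  · obtain ⟨e₁, -, -, e₄, n₁, n₂, -, hbd⟩ := id h
    have hb : b ≠ w := by
      rintro rfl; exact n₂ (minMaxSwap_adj_right_of_adj_left hbd.symm e₄).symm
    have hd : d ≠ w := by
      rintro rfl; exact n₂ (minMaxSwap_adj_right_of_adj_left hbd e₁.symm)
    have hc : c ≠ w := by rintro rfl; exact n₁ hvw₂
    exact hOb.minMaxSwap_not_isInducedC4_left hb hc hd h
  · obtain ⟨e₁, -, -, -, e₅, n₁, n₂, -, n₄, -, -, -, -, d₄, -⟩ := id h
    have h₁ : c₁ ≠ w := by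
      rintro rfl; exact n₄ (minMaxSwap_adj_right_of_adj_left d₄.symm e₅).symm
    have h₄ : c₄ ≠ w := by
      rintro rfl; exact n₄ (minMaxSwap_adj_right_of_adj_left d₄ e₁.symm)
    have h₂ : c₂ ≠ w := by rintro rfl; exact n₁ hvw₂
    have h₃ : c₃ ≠ w := by rintro rfl; exact n₂ hvw₂
    exact hOb.minMaxSwap_not_isInducedC5_left hvw h₁ h₂ h₃ h₄ h

lemma IsObstructionFree.minMaxSwap_not_hasObstructionAt_right (hOb : IsObstructionFree H)
    (hvw : H.Adj v w) (hjoin : PrivateNeighborsJoined H v w) : ¬ HasObstructionAt H₂ w := by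
  have hvw₂ : (H₂).Adj v w := minMaxSwap_adj_self hvw.ne
  have hleft := hOb.minMaxSwap_not_hasObstructionAt_left hvw hjoin
  rintro (⟨y, z, h⟩ | ⟨b, c, d, h⟩ | ⟨c₁, c₂, c₃, c₄, h⟩)
  · exact hOb.minMaxSwap_not_isInd3_right hvw h
  · obtain ⟨-, -, -, -, n₁, -, -, -⟩ := id h
    by_cases hb : b = v
    · subst hb; exact hleft (.inr (.inl ⟨c, d, w, h.rotate⟩))
    by_cases hd : d = v
    · subst hd; exact hleft (.inr (.inl ⟨c, b, w, h.reflect.rotate⟩))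
    have hc : c ≠ v := by rintro rfl; exact n₁ hvw₂.symm
    exact hOb.minMaxSwap_not_isInducedC4_right hvw hb hc hd h
  · obtain ⟨-, -, -, -, -, n₁, n₂, -, -, -, -, -, -, -, -⟩ := id h
    by_cases h₁ : c₁ = v
    · subst h₁; exact hleft (.inr (.inr ⟨c₂, c₃, c₄, w, h.rotate⟩))
    by_cases h₄ : c₄ = v
    · subst h₄; exact hleft (.inr (.inr ⟨c₃, c₂, c₁, w, h.reflect.rotate⟩))
    have h₂ : c₂ ≠ v := by rintro rfl; exact n₁ hvw₂.symm
    have h₃ : c₃ ≠ v := by rintro rfl; exact n₂ hvw₂.symm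
    exact hOb.minMaxSwap_not_isInducedC5_right h₁ h₂ h₃ h₄ h

theorem IsObstructionFree.minMaxSwap (hOb : IsObstructionFree H) (hvw : H.Adj v w)
    (hjoin : PrivateNeighborsJoined H v w) : IsObstructionFree H₂ := by
  refine hOb.of_agree {v, w} (fun a c ha hc => ?_) ?_
  · simp only [Set.mem_insert_iff, Set.mem_singleton_iff, not_or] at ha hc
    exact minMaxSwap_adj_of_ne ha.1 ha.2 hc.1 hc.2
  · rintro x (rfl | rfl)
    · exact hOb.minMaxSwap_not_hasObstructionAt_left hvw hjoin
    · exact hOb.minMaxSwap_not_hasObstructionAt_right hvw hjoin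

lemma le_minMaxSwap {G : SimpleGraph V} (hGH : G ≤ H) (hvw : v ≠ w)
    (hdom : ∀ z, z ≠ w → G.Adj z v → G.Adj z w) : G ≤ minMaxSwap H v w := by
  have key : ∀ a c, G.Adj a c → a ≠ v → a ≠ w → (H₂).Adj a c := by
    intro a c hac ha ha'
    by_cases hcv : c = v
    · subst hcv; exact (minMaxSwap_adj_left ha ha').2 ⟨hGH hac, hGH (hdom a ha' hac)⟩
    by_cases hcw : c = w
    · subst hcw; exact (minMaxSwap_adj_right ha ha').2 (.inr (hGH hac))
    exact (minMaxSwap_adj_of_ne ha ha' hcv hcw).2 (hGH hac)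
  intro a c hac
  by_cases ha : a ≠ v ∧ a ≠ w
  · exact key a c hac ha.1 ha.2
  by_cases hc : c ≠ v ∧ c ≠ w
  · exact (key c a hac.symm hc.1 hc.2).symm
  have hne := hac.ne
  rw [not_and_or, not_ne_iff, not_ne_iff] at ha hc
  rcases ha with rfl | rfl <;> rcases hc with rfl | rfl
  · exact absurd rfl hne
  · exact minMaxSwap_adj_self hvw
  · exact (minMaxSwap_adj_self hvw).symm
  · exact absurd rfl hne

lemma exists_eq_of_adj_minMaxSwap {G : SimpleGraph V} {F : Finset (Sym2 V)}
    (hvw : G.Adj v w) (hdom : ∀ z, z ≠ w → G.Adj z v → G.Adj z w) {a c : V}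
    (hac : (minMaxSwap (addEdges G F) v w).Adj a c) (hnac : ¬ (addEdges G F).Adj a c) :
    ∃ z, z ≠ v ∧ z ≠ w ∧ s(a, c) = s(z, w) ∧ s(z, v) ∈ F ∧ ¬ (addEdges G F).Adj z w := by
  have toW : ∀ z, z ≠ v → z ≠ w → (minMaxSwap (addEdges G F) v w).Adj z w →
      ¬ (addEdges G F).Adj z w → s(z, v) ∈ F := by
    intro z hzv hzw hz hnz
    have hzv' := ((minMaxSwap_adj_right hzv hzw).1 hz).resolve_right hnz
    rw [addEdges_adj] at hzv'
    rcases hzv' with hG | hF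
    · exact absurd (le_addEdges G F (hdom z hzw hG)) hnz
    · exact hF.1
  by_cases ha : a = v ∨ a = w <;> by_cases hc : c = v ∨ c = w
  · have hne := hac.ne
    exfalso
    rcases ha with rfl | rfl <;> rcases hc with rfl | rfl
    · exact hne rfl
    · exact hnac (le_addEdges G F hvw)
    · exact hnac (le_addEdges G F hvw.symm)
    · exact hne rfl
  · rw [not_or] at hc
    rcases ha with rfl | rfl
    · exact absurd ((minMaxSwap_adj_left hc.1 hc.2).1 hac.symm).1.symm hnac
    · exact ⟨c, hc.1, hc.2, Sym2.eq_swap, toW c hc.1 hc.2 hac.symm (fun h => hnac h.symm),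
        fun h => hnac h.symm⟩
  · rw [not_or] at ha
    rcases hc with rfl | rfl
    · exact absurd ((minMaxSwap_adj_left ha.1 ha.2).1 hac).1 hnac
    · exact ⟨a, ha.1, ha.2, rfl, toW a ha.1 ha.2 hac hnac, hnac⟩
  · rw [not_or] at ha hc
    exact absurd ((minMaxSwap_adj_of_ne ha.1 ha.2 hc.1 hc.2).1 hac) hnac

end MinMaxSwap

lemma sum_lt_sum_of_injOn {α : Type*} [DecidableEq α] {s t : Finset α} {f : α → ℕ}
    (φ : α → α) (hmaps : ∀ a ∈ s, φ a ∈ t) (hinj : Set.InjOn φ s)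
    (hle : ∀ a ∈ s, f a ≤ f (φ a)) (hlt : ∃ a ∈ s, f a < f (φ a)) :
    ∑ a ∈ s, f a < ∑ a ∈ t, f a :=
  calc ∑ a ∈ s, f a < ∑ a ∈ s, f (φ a) := Finset.sum_lt_sum hle hlt
    _ = ∑ a ∈ s.image φ, f a := (Finset.sum_image hinj).symm
    _ ≤ ∑ a ∈ t, f a :=
      Finset.sum_le_sum_of_subset (by simpa [Finset.image_subset_iff] using hmaps)

def pairWeight (g : V → ℕ) : Sym2 V → ℕ :=
  Sym2.lift ⟨fun a c => g a + g c, fun _ _ => add_comm _ _⟩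

def swapBack [DecidableEq V] (F : Finset (Sym2 V)) (v w : V) (e : Sym2 V) : Sym2 V :=
  if e ∈ F then e else e.map (Equiv.swap v w)

section SwapBack

variable [DecidableEq V] {F F₂ : Finset (Sym2 V)} {v w : V}

lemma swapBack_mk {z : V} (hzv : z ≠ v) (hzw : z ≠ w) (h : s(z, w) ∉ F) :
    swapBack F v w s(z, w) = s(z, v) := by
  simp [swapBack, h, Equiv.swap_apply_of_ne_of_ne hzv hzw]

lemma swapBack_mapsTo_injOn (hmoved : ∀ e ∈ F₂, e ∉ F →
      ∃ z, z ≠ v ∧ z ≠ w ∧ e = s(z, w) ∧ s(z, v) ∈ F ∧ s(z, v) ∉ F₂) :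
    (∀ e ∈ F₂, swapBack F v w e ∈ F) ∧ Set.InjOn (swapBack F v w) F₂ := by
  have hnotMem : ∀ e ∈ F₂, e ∉ F → swapBack F v w e ∉ F₂ := by
    intro e he heF
    obtain ⟨z, hzv, hzw, rfl, -, hz⟩ := hmoved e he heF
    rwa [swapBack_mk hzv hzw heF]
  refine ⟨fun e he => ?_, fun e₁ h₁ e₂ h₂ heq => ?_⟩
  · by_cases heF : e ∈ F
    · simp [swapBack, heF]
    obtain ⟨z, hzv, hzw, rfl, hzF, -⟩ := hmoved e he heF
    rwa [swapBack_mk hzv hzw heF]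
  by_cases hF₁ : e₁ ∈ F <;> by_cases hF₂ : e₂ ∈ F
  · simpa [swapBack, hF₁, hF₂] using heq
  · refine absurd ?_ (hnotMem e₂ h₂ hF₂)
    rw [← heq]; simpa [swapBack, hF₁] using h₁
  · refine absurd ?_ (hnotMem e₁ h₁ hF₁)
    rw [heq]; simpa [swapBack, hF₂] using h₂
  · simp only [swapBack, hF₁, hF₂, if_false] at heq
    exact Sym2.map.injective (Equiv.injective _) heq

lemma pairWeight_le_swapBack (hmoved : ∀ e ∈ F₂, e ∉ F →
      ∃ z, z ≠ v ∧ z ≠ w ∧ e = s(z, w) ∧ s(z, v) ∈ F ∧ s(z, v) ∉ F₂)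
    {g : V → ℕ} (hg : g w ≤ g v) {e : Sym2 V} (he : e ∈ F₂) :
    pairWeight g e ≤ pairWeight g (swapBack F v w e) := by
  by_cases heF : e ∈ F
  · simp [swapBack, heF]
  obtain ⟨z, hzv, hzw, rfl, -, -⟩ := hmoved e he heF
  rw [swapBack_mk hzv hzw heF]
  simpa [pairWeight] using hg

end SwapBack

lemma addEdges_toFinset_sdiff {G H : SimpleGraph V} (h : G ≤ H)
    [Fintype ↑(H.edgeSet \ G.edgeSet)] : addEdges G (H.edgeSet \ G.edgeSet).toFinset = H := by
  ext a c
  rw [addEdges_adj, Set.mem_toFinset, Set.mem_sdiff, mem_edgeSet, mem_edgeSet]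
  exact ⟨fun hac => hac.elim (@h a c) (·.1.1), fun hac => (em (G.Adj a c)).imp_right
    fun hG => ⟨⟨hac, hG⟩, hac.ne⟩⟩

/-- The swap trades every added pair `zw` for the pair `zv` that `F` added, so it adds no more
pairs than `F`, and strictly less weight when `w` is lighter than `v`. -/
theorem exists_minMaxSwap_completion [Fintype V] {G : SimpleGraph V} {F : Finset (Sym2 V)}
    (hF : ∀ e ∈ F, e ∉ G.edgeSet) (hOb : IsObstructionFree (addEdges G F)) {u v w : V}
    (hvw : G.Adj v w) (hdom : ∀ z, z ≠ w → G.Adj z v → G.Adj z w)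
    (hjoin : PrivateNeighborsJoined (addEdges G F) v w)
    (huv : s(u, v) ∈ F) (huw : ¬ (addEdges G F).Adj u w) {g : V → ℕ} (hg : g w < g v) :
    ∃ F₂ : Finset (Sym2 V), (∀ e ∈ F₂, ¬ e.IsDiag) ∧ (∀ e ∈ F₂, e ∉ G.edgeSet) ∧
      F₂.card ≤ F.card ∧ IsObstructionFree (addEdges G F₂) ∧
      ∑ e ∈ F₂, pairWeight g e < ∑ e ∈ F, pairWeight g e := by
  classical
  set H₂ := minMaxSwap (addEdges G F) v w
  set F₂ := (H₂.edgeSet \ G.edgeSet).toFinset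
  have mem₂ : ∀ e, e ∈ F₂ ↔ e ∈ H₂.edgeSet ∧ e ∉ G.edgeSet := fun e => Set.mem_toFinset
  have moved : ∀ e ∈ F₂, e ∉ F →
      ∃ z, z ≠ v ∧ z ≠ w ∧ e = s(z, w) ∧ s(z, v) ∈ F ∧ s(z, v) ∉ F₂ := by
    intro e he heF
    induction e with
    | _ a c =>
      obtain ⟨hH₂, hG⟩ := (mem₂ _).1 he
      obtain ⟨z, hzv, hzw, hac, hzF, hz⟩ := exists_eq_of_adj_minMaxSwap hvw hdom hH₂ fun h => by
        rcases (addEdges_adj G F a c).1 h with h | h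
        exacts [hG h, heF h.1]
      exact ⟨z, hzv, hzw, hac, hzF,
        fun h => hz ((minMaxSwap_adj_left hzv hzw).1 ((mem₂ _).1 h).1).2⟩
  obtain ⟨hmaps, hinj⟩ := swapBack_mapsTo_injOn moved
  have hu : u ≠ v ∧ u ≠ w := by
    refine ⟨by rintro rfl; exact huw (le_addEdges G F hvw), ?_⟩
    rintro rfl
    exact hF _ huv hvw.symm
  have huv' : (addEdges G F).Adj u v := (addEdges_adj G F u v).2 (.inr ⟨huv, hu.1⟩)
  have huw₂ : s(u, w) ∈ F₂ :=
    (mem₂ _).2 ⟨(minMaxSwap_adj_right hu.1 hu.2).2 (.inl huv'), fun h => huw (le_addEdges G F h)⟩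
  have huwF : s(u, w) ∉ F := fun h => huw ((addEdges_adj G F u w).2 (.inr ⟨h, hu.2⟩))
  refine ⟨F₂, fun e he => not_isDiag_of_mem_edgeSet _ ((mem₂ e).1 he).1,
    fun e he => ((mem₂ e).1 he).2, Finset.card_le_card_of_injOn _ hmaps hinj, ?_,
    sum_lt_sum_of_injOn _ hmaps hinj (fun e he => pairWeight_le_swapBack moved hg.le he)
      ⟨s(u, w), huw₂, ?_⟩⟩
  · rw [addEdges_toFinset_sdiff (le_minMaxSwap (le_addEdges G F) hvw.ne hdom)]
    exact hOb.minMaxSwap (le_addEdges G F hvw) hjoin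
  · rw [swapBack_mk hu.1 hu.2 huwF]
    simpa [pairWeight] using hg

/-! ### K-joins -/

section KJoin

variable {G : SimpleGraph V} {p : ℕ} {b : Fin p → V} {N L R C : Set V}

lemma KJoinWith.reverse (h : KJoinWith G b N L R C) : KJoinWith G (b ∘ Fin.rev) N R L C := by
  have hrange : Set.range (b ∘ Fin.rev) = Set.range b := Fin.rev_surjective.range_comp b
  have hrev : ∀ i j : Fin p, i.val + 1 = j.val → (Fin.rev j).val + 1 = (Fin.rev i).val := by
    intro i j hij; simp only [Fin.val_rev]; omega
  refine ⟨h.inj.comp Fin.rev_injective, fun i j hij => h.clique _ _ (Fin.rev_injective.ne hij),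
    fun v hv => ?_, ?_, fun v hv i => h.nAdj v hv _, fun v hv i => h.cNotAdj v hv _,
    fun v hv => ?_, fun v hv => ?_, fun v hv i hi => h.lLast v hv _ ?_,
    fun v hv i hi => h.rFirst v hv _ ?_, fun i j hij r hr => h.lMono _ _ (hrev i j hij) r hr,
    fun i j hij x hx => h.rMono _ _ (hrev i j hij) x hx⟩
  · rw [hrange] at hv
    simpa only [Set.union_right_comm N R L] using h.cover v hv
  · rw [hrange]
    exact ((List.Perm.swap R L [C]).cons N |>.cons _).pairwise_iff
      (fun h => Disjoint.symm h) |>.1 h.disj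
  · obtain ⟨i, hi⟩ := h.lrAdj v (Set.union_comm R L ▸ hv)
    exact ⟨Fin.rev i, by simpa using hi⟩
  · obtain ⟨i, hi⟩ := h.lrNotAll v (Set.union_comm R L ▸ hv)
    exact ⟨Fin.rev i, by simpa using hi⟩
  · simp only [Fin.val_rev]; omega
  · simp only [Fin.val_rev]; have := i.isLt; omega

lemma KJoinWith.apply_notMem (h : KJoinWith G b N L R C) (i : Fin p) :
    b i ∉ N ∧ b i ∉ L ∧ b i ∉ R ∧ b i ∉ C := by
  have hdisj := h.disj
  simp only [List.pairwise_cons, List.mem_cons, forall_eq_or_imp] at hdisj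
  obtain ⟨⟨hN, hL, hR, hC, -⟩, -⟩ := hdisj
  exact ⟨Set.disjoint_left.1 hN ⟨i, rfl⟩, Set.disjoint_left.1 hL ⟨i, rfl⟩,
    Set.disjoint_left.1 hR ⟨i, rfl⟩, Set.disjoint_left.1 hC ⟨i, rfl⟩⟩

lemma KJoinWith.adj_of_le (h : KJoinWith G b N L R C) {x : V} (hx : x ∈ L) {i j : Fin p}
    (hij : i ≤ j) (hj : G.Adj x (b j)) : G.Adj x (b i) := by
  obtain ⟨i, hi⟩ := i
  obtain ⟨j, hj'⟩ := j
  simp only [Fin.mk_le_mk] at hij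
  induction j, hij using Nat.le_induction with
  | base => exact hj
  | succ j hij ih => exact ih (by omega) (h.lMono ⟨j, by omega⟩ ⟨j + 1, hj'⟩ rfl x hx hj.symm).symm

lemma KJoinWith.mem_cases (h : KJoinWith G b N L ∅ C) (x : V) :
    (x ∈ Set.range b ∨ x ∈ N) ∨ x ∈ L ∪ C := by
  by_cases hx : x ∈ Set.range b
  · exact .inl (.inl hx)
  rcases h.cover x hx with ((hx | hx) | hx) | hx
  · exact .inl (.inr hx)
  · exact .inr (.inl hx)
  · exact absurd hx (Set.notMem_empty x)
  · exact .inr (.inr hx)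

lemma KJoinWith.mem_L_union_C_of_not_adj (h : KJoinWith G b N L ∅ C) {i : Fin p} {x : V}
    (hx : b i ≠ x) (hnadj : ¬ G.Adj (b i) x) : x ∈ L ∪ C := by
  rcases h.mem_cases x with (⟨j, rfl⟩ | hN) | hLC
  · exact absurd (h.clique i j fun hij => hx (congrArg b hij)) hnadj
  · exact absurd (h.nAdj x hN i).symm hnadj
  · exact hLC

lemma KJoinWith.mem_L_of_adj (h : KJoinWith G b N L ∅ C) {i : Fin p} {x : V}
    (hx : x ∈ L ∪ C) (hadj : G.Adj x (b i)) : x ∈ L :=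
  hx.resolve_right fun hC => h.cNotAdj x hC i hadj

lemma KJoinWith.mem_N_of_not_adj (h : KJoinWith G b N L ∅ C) {x y : V}
    (hx : x ∈ Set.range b ∨ x ∈ N) (hy : y ∈ Set.range b ∨ y ∈ N) (hxy : x ≠ y)
    (hnadj : ¬ G.Adj x y) : x ∈ N ∧ y ∈ N := by
  rcases hx with ⟨i, rfl⟩ | hx <;> rcases hy with ⟨j, rfl⟩ | hy
  · exact absurd (h.clique i j fun hij => hxy (congrArg b hij)) hnadj
  · exact absurd (h.nAdj y hy i).symm hnadj
  · exact absurd (h.nAdj x hx j) hnadj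
  · exact ⟨hx, hy⟩

lemma KJoinWith.ne_of_mem_L_union_C (h : KJoinWith G b N L ∅ C) (i : Fin p) {x : V}
    (hx : x ∈ L ∪ C) : b i ≠ x := by
  rintro rfl
  exact hx.elim (h.apply_notMem i).2.1 (h.apply_notMem i).2.2.2

/-- The last vertex of `B` sees nothing of `L ∪ C`. -/
lemma KJoinWith.isClique_L_union_C (h : KJoinWith G b N L ∅ C)
    (hclean : IsBccClean G (Set.range b)) (hp : 0 < p) : G.IsClique (L ∪ C) := by
  set last : Fin p := ⟨p - 1, by omega⟩
  have hlast : ∀ z ∈ L ∪ C, ¬ G.Adj (b last) z := fun z hz hadj =>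
    hz.elim (fun hL => h.lLast z hL last rfl hadj.symm) fun hC => h.cNotAdj z hC last hadj.symm
  intro z hz z' hz' hne
  by_contra hn
  exact (hclean _ ⟨last, rfl⟩).1 ⟨z, z', h.ne_of_mem_L_union_C last hz,
    h.ne_of_mem_L_union_C last hz', hne, hlast z hz, hlast z' hz', hn⟩

/-- Otherwise `x z z' (b j)` is an induced `C₄` through `b j`. -/
lemma KJoinWith.adj_of_adj_of_not_adj (h : KJoinWith G b N L ∅ C)
    (hclean : IsBccClean G (Set.range b)) {x z z' : V} (hx : ∀ i, G.Adj x (b i))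
    (hz : z ∈ L ∪ C) (hz' : z' ∈ L ∪ C) (hxz : G.Adj x z) (hxz' : ¬ G.Adj x z') {j : Fin p}
    (hj : G.Adj z' (b j)) : G.Adj z (b j) := by
  by_contra hzj
  have hne : z ≠ z' := by rintro rfl; exact hxz' hxz
  have hxz'ne : x ≠ z' := by
    rintro rfl
    obtain ⟨i, hi⟩ := h.lrNotAll x (.inl (h.mem_L_of_adj hz' hj))
    exact hi (hx i)
  exact (hclean _ ⟨j, rfl⟩).2 ⟨x, z, z', b j, ⟨hxz, h.isClique_L_union_C hclean j.pos hz hz' hne,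
    hj, (hx j).symm, hxz', hzj, hxz'ne, (h.ne_of_mem_L_union_C j hz).symm⟩,
    .inr (.inr (.inr rfl))⟩

end KJoin

section KJoinCompletion

variable {G : SimpleGraph V} {p : ℕ} {b : Fin p → V} {N L C : Set V} {S : Set (Fin p)}
  {F : Finset (Sym2 V)}

lemma KJoinWith.notMem_image_of_mem_N (h : KJoinWith G b N L ∅ C) {z : V} (hz : z ∈ N) :
    z ∉ b '' S := by
  rintro ⟨j, -, rfl⟩; exact (h.apply_notMem j).1 hz

lemma KJoinWith.notMem_image_of_mem_L_union_C (h : KJoinWith G b N L ∅ C) {z : V}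
    (hz : z ∈ L ∪ C) : z ∉ b '' S := by
  rintro ⟨j, -, rfl⟩; exact h.ne_of_mem_L_union_C j hz rfl

lemma KJoinWith.adj_of_mem_range_or_N (h : KJoinWith G b N L ∅ C) {j : Fin p} {z : V}
    (hz : z ∈ Set.range b ∨ z ∈ N) (hne : b j ≠ z) : G.Adj (b j) z := by
  rcases hz with ⟨i, rfl⟩ | hz
  · exact h.clique j i fun hji => hne (congrArg b hji)
  · exact (h.nAdj z hz j).symm

lemma KJoinWith.not_adj_anchor (h : KJoinWith G b N L ∅ C) {l : Fin p}
    (hlS : ∀ i ∈ S, i < l) (hlF : ∀ e ∈ F, b l ∉ e) {i : Fin p} (hi : i ∈ S) {z : V}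
    (hz : z ∈ L ∪ C) (hiz : ¬ G.Adj (b i) z) :
    ¬ (addEdges (addUniversal G (b '' S)) F).Adj (b l) z := by
  have hlM : b l ∉ b '' S := by
    rintro ⟨j, hj, hjl⟩; exact (hlS j hj).ne (h.inj hjl)
  rw [addEdges_addUniversal_adj_of_notMem hlM (h.notMem_image_of_mem_L_union_C hz),
    addEdges_adj_iff_of_forall_notMem hlF]
  intro hlz
  exact hiz (h.adj_of_le (h.mem_L_of_adj hz hlz.symm) (hlS i hi).le hlz.symm).symm

lemma KJoinWith.not_isInd3_addEdges (h : KJoinWith G b N L ∅ C)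
    (hclean : IsBccClean G (Set.range b)) {i : Fin p} (hi : ∀ e ∈ F, b i ∉ e) {y z : V} :
    ¬ IsInd3 (addEdges G F) (b i) y z := by
  rintro ⟨d₁, d₂, d₃, n₁, n₂, n₃⟩
  rw [addEdges_adj_iff_of_forall_notMem hi] at n₁ n₂
  exact n₃ (le_addEdges G F (h.isClique_L_union_C hclean i.pos
    (h.mem_L_union_C_of_not_adj d₁ n₁) (h.mem_L_union_C_of_not_adj d₂ n₂) d₃))

/-- Two neighbours of `b i` in `N` would close an induced `C₄` with the anchor `b l`. -/
lemma KJoinWith.isInducedC4_cases (h : KJoinWith G b N L ∅ C)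
    (hclean : IsBccClean G (Set.range b))
    (hOb : IsObstructionFree (addEdges (addUniversal G (b '' S)) F))
    (hFS : ∀ e ∈ F, ∀ i ∈ S, b i ∉ e) {l : Fin p} (hlS : ∀ i ∈ S, i < l)
    (hlF : ∀ e ∈ F, b l ∉ e) {i : Fin p} (hi : i ∈ S) {u v w : V}
    (h4 : IsInducedC4 (addEdges G F) (b i) u v w) :
    ((u ∈ Set.range b ∨ u ∈ N) ∧ w ∈ L ∪ C) ∨ ((w ∈ Set.range b ∨ w ∈ N) ∧ u ∈ L ∪ C) := by
  obtain ⟨-, huv, hvw, -, n₁, n₂, d₁, d₂⟩ := h4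
  rw [addEdges_adj_iff_of_forall_notMem fun e he => hFS e he i hi] at n₁
  have hv := h.mem_L_union_C_of_not_adj d₁ n₁
  have hvM := h.notMem_image_of_mem_L_union_C (S := S) hv
  rcases h.mem_cases u with hu | hu <;> rcases h.mem_cases w with hw | hw
  · exfalso
    obtain ⟨huN, hwN⟩ := h.mem_N_of_not_adj hu hw d₂ fun h => n₂ (le_addEdges G F h)
    have huM := h.notMem_image_of_mem_N (S := S) huN
    have hwM := h.notMem_image_of_mem_N (S := S) hwN
    exact hOb.2.1 (b l) u v w
      ⟨le_addEdges_addUniversal (h.nAdj u huN l).symm,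
      (addEdges_addUniversal_adj_of_notMem huM hvM).2 huv,
      (addEdges_addUniversal_adj_of_notMem hvM hwM).2 hvw,
      le_addEdges_addUniversal (h.nAdj w hwN l),
      h.not_adj_anchor hlS hlF hi hv n₁,
      fun h => n₂ ((addEdges_addUniversal_adj_of_notMem huM hwM).1 h),
      h.ne_of_mem_L_union_C l hv, d₂⟩
  · exact .inl ⟨hu, hw⟩
  · exact .inr ⟨hw, hu⟩
  · exact absurd (le_addEdges G F (h.isClique_L_union_C hclean i.pos hu hw d₂)) n₂

/-- A chord from `b i`'s non-neighbour `c₂` to `c₄ ∈ L ∪ C` cuts a `C₄` off the `C₅`; if neither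
end lies in `L ∪ C`, both lie in `N` and the anchor `b l` closes an induced `C₅`. -/
lemma KJoinWith.exists_isInducedC4_of_isInducedC5 (h : KJoinWith G b N L ∅ C)
    (hclean : IsBccClean G (Set.range b))
    (hOb : IsObstructionFree (addEdges (addUniversal G (b '' S)) F))
    (hFS : ∀ e ∈ F, ∀ i ∈ S, b i ∉ e) {l : Fin p} (hlS : ∀ i ∈ S, i < l)
    (hlF : ∀ e ∈ F, b l ∉ e) {i : Fin p} (hi : i ∈ S) {c₁ c₂ c₃ c₄ : V}
    (h5 : IsInducedC5 (addEdges G F) (b i) c₁ c₂ c₃ c₄) :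
    ∃ u v w, IsInducedC4 (addEdges G F) (b i) u v w := by
  have adj_iff : ∀ z, (addEdges G F).Adj (b i) z ↔ G.Adj (b i) z :=
    fun z => addEdges_adj_iff_of_forall_notMem fun e he => hFS e he i hi
  have nonNbr : ∀ z, b i ≠ z → ¬ (addEdges G F).Adj (b i) z → z ∈ L ∪ C :=
    fun z hne hn => h.mem_L_union_C_of_not_adj hne ((adj_iff z).not.1 hn)
  have chord : ∀ c₁ c₂ c₃ c₄, IsInducedC5 (addEdges G F) (b i) c₁ c₂ c₃ c₄ → c₄ ∈ L ∪ C →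
      ∃ u v w, IsInducedC4 (addEdges G F) (b i) u v w := by
    rintro c₁ c₂ c₃ c₄ ⟨e₁, e₂, -, -, e₅, n₁, -, -, n₄, -, d₁, -, -, d₄, d₅⟩ hc₄
    exact ⟨c₁, c₂, c₄, e₁, e₂, le_addEdges G F
      (h.isClique_L_union_C hclean i.pos (nonNbr c₂ d₁ n₁) hc₄ d₅), e₅, n₁, n₄, d₁, d₄⟩
  by_cases hc₄ : c₄ ∈ L ∪ C
  · exact chord _ _ _ _ h5 hc₄
  by_cases hc₁ : c₁ ∈ L ∪ C
  · exact chord _ _ _ _ h5.reflect hc₁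
  exfalso
  obtain ⟨-, e₂, e₃, e₄, -, n₁, n₂, n₃, n₄, n₅, d₁, d₂, d₃, d₄, d₅⟩ := h5
  obtain ⟨h₁, h₄⟩ := h.mem_N_of_not_adj ((h.mem_cases c₁).resolve_right hc₁)
    ((h.mem_cases c₄).resolve_right hc₄) d₄ fun h => n₄ (le_addEdges G F h)
  have h₂ := nonNbr c₂ d₁ n₁
  have h₃ := nonNbr c₃ d₂ n₂
  have lift := fun {a c : V} (ha : a ∉ b '' S) (hc : c ∉ b '' S) =>
    addEdges_addUniversal_adj_of_notMem (G := G) (F := F) ha hc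
  have M₁ := h.notMem_image_of_mem_N (S := S) h₁
  have M₄ := h.notMem_image_of_mem_N (S := S) h₄
  have M₂ := h.notMem_image_of_mem_L_union_C (S := S) h₂
  have M₃ := h.notMem_image_of_mem_L_union_C (S := S) h₃
  exact hOb.2.2 (b l) c₁ c₂ c₃ c₄ ⟨le_addEdges_addUniversal (h.nAdj c₁ h₁ l).symm,
    (lift M₁ M₂).2 e₂, (lift M₂ M₃).2 e₃, (lift M₃ M₄).2 e₄,
    le_addEdges_addUniversal (h.nAdj c₄ h₄ l),
    h.not_adj_anchor hlS hlF hi h₂ ((adj_iff c₂).not.1 n₁),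
    h.not_adj_anchor hlS hlF hi h₃ ((adj_iff c₃).not.1 n₂),
    fun h => n₃ ((lift M₁ M₃).1 h), fun h => n₄ ((lift M₁ M₄).1 h),
    fun h => n₅ ((lift M₂ M₄).1 h), h.ne_of_mem_L_union_C l h₂, h.ne_of_mem_L_union_C l h₃,
    d₃, d₄, d₅⟩

lemma KJoinWith.exists_isInducedC4_of_hasObstructionAt (h : KJoinWith G b N L ∅ C)
    (hclean : IsBccClean G (Set.range b))
    (hOb : IsObstructionFree (addEdges (addUniversal G (b '' S)) F))
    (hFS : ∀ e ∈ F, ∀ i ∈ S, b i ∉ e) {l : Fin p} (hlS : ∀ i ∈ S, i < l)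
    (hlF : ∀ e ∈ F, b l ∉ e) {i : Fin p} (hi : i ∈ S)
    (hobs : HasObstructionAt (addEdges G F) (b i)) :
    ∃ u v w, IsInducedC4 (addEdges G F) (b i) u v w ∧ (u ∈ Set.range b ∨ u ∈ N) ∧
      w ∈ L ∪ C := by
  obtain ⟨u, v, w, h4⟩ : ∃ u v w, IsInducedC4 (addEdges G F) (b i) u v w := by
    rcases hobs with ⟨y, z, h3⟩ | h4 | ⟨c₁, c₂, c₃, c₄, h5⟩
    · exact absurd h3 (h.not_isInd3_addEdges hclean fun e he => hFS e he i hi)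
    · exact h4
    · exact h.exists_isInducedC4_of_isInducedC5 hclean hOb hFS hlS hlF hi h5
  rcases h.isInducedC4_cases hclean hOb hFS hlS hlF hi h4 with huw | hwu
  · exact ⟨u, v, w, h4, huw⟩
  · exact ⟨w, v, u, h4.reflect, hwu⟩

lemma KJoinWith.adj_of_adj_of_separated (h : KJoinWith G b N L ∅ C)
    (hclean : IsBccClean G (Set.range b)) {i : Fin p} {v w : V} (hv : v ∈ L ∪ C)
    (hw : w ∈ L ∪ C) (hvi : ¬ G.Adj v (b i)) (hwi : G.Adj w (b i)) {z : V} (hzw : z ≠ w)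
    (hzv : G.Adj z v) : G.Adj z w := by
  rcases h.mem_cases z with (⟨j, rfl⟩ | hz) | hz
  · by_contra hjw
    have hij : i < j := lt_of_not_ge fun hji =>
      hjw (h.adj_of_le (h.mem_L_of_adj hw hwi) hji hwi).symm
    exact hvi (h.adj_of_le (h.mem_L_of_adj hv hzv.symm) hij.le hzv.symm)
  · by_contra hzw'
    exact hvi (h.adj_of_adj_of_not_adj hclean (h.nAdj z hz) hv hw hzv hzw' hwi)
  · exact h.isClique_L_union_C hclean i.pos hz hw hzw

noncomputable def nonAdjCount (G : SimpleGraph V) (b : Fin p → V) (z : V) : ℕ :=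
  {j | ¬ G.Adj z (b j)}.ncard

lemma KJoinWith.nonAdjCount_lt (h : KJoinWith G b N L ∅ C) {i : Fin p} {v w : V}
    (hv : v ∈ L ∪ C) (hw : w ∈ L ∪ C) (hvi : ¬ G.Adj v (b i)) (hwi : G.Adj w (b i)) :
    nonAdjCount G b w < nonAdjCount G b v := by
  refine Set.ncard_lt_ncard ⟨fun j hj hvj => hj ?_, fun hsub => hsub hvi hwi⟩ (Set.toFinite _)
  have hji : j ≤ i := le_of_not_gt fun hij => hvi (h.adj_of_le (h.mem_L_of_adj hv hvj) hij.le hvj)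
  exact h.adj_of_le (h.mem_L_of_adj hw hwi) hji hwi

/-- A non-adjacent pair `z₁ ∈ N(v) \ N(w)`, `z₂ ∈ N(w) \ N(v)` would give an induced `C₄` or `C₅`
with the anchor `b l`. -/
lemma KJoinWith.privateNeighborsJoined (h : KJoinWith G b N L ∅ C)
    (hclean : IsBccClean G (Set.range b))
    (hOb : IsObstructionFree (addEdges (addUniversal G (b '' S)) F)) {l : Fin p}
    (hlS : ∀ i ∈ S, i < l) (hlF : ∀ e ∈ F, b l ∉ e) {i : Fin p} (hi : i ∈ S) {v w : V}
    (hv : v ∈ L ∪ C) (hw : w ∈ L ∪ C) (hvi : ¬ G.Adj (b i) v) :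
    PrivateNeighborsJoined (addEdges (addUniversal G (b '' S)) F) v w := by
  set HU := addEdges (addUniversal G (b '' S)) F
  have hG : G ≤ HU := le_addEdges_addUniversal
  intro z₁ z₂ h₁w h₂v a₁v n₁w a₂w n₂v
  by_contra n₁₂
  have hvw : v ≠ w := by rintro rfl; exact n₁w a₁v
  have mem_range_or_N : ∀ z x, x ∈ L ∪ C → z ≠ x → ¬ HU.Adj z x → z ∈ Set.range b ∨ z ∈ N :=
    fun z x hx hne hn => (h.mem_cases z).resolve_right fun hz =>
      hn (hG (h.isClique_L_union_C hclean i.pos hz hx hne))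
  have h₁ := mem_range_or_N z₁ w hw h₁w n₁w
  have h₂ := mem_range_or_N z₂ v hv h₂v n₂v
  have hlv : ¬ HU.Adj (b l) v := h.not_adj_anchor hlS hlF hi hv hvi
  have hl₁ : b l ≠ z₁ := by rintro rfl; exact hlv a₁v
  have hvw' : HU.Adj v w := hG (h.isClique_L_union_C hclean i.pos hv hw hvw)
  by_cases hlw : HU.Adj w (b l)
  · exact hOb.2.1 z₁ v w (b l) ⟨a₁v, hvw', hlw, hG (h.adj_of_mem_range_or_N h₁ hl₁), n₁w,
      fun h => hlv h.symm, h₁w, (h.ne_of_mem_L_union_C l hv).symm⟩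
  · have hl₂ : b l ≠ z₂ := by rintro rfl; exact hlw a₂w.symm
    have h₁₂ : z₁ ≠ z₂ := by rintro rfl; exact n₁w a₂w
    exact hOb.2.2 z₁ v w z₂ (b l) ⟨a₁v, hvw', a₂w.symm, (hG (h.adj_of_mem_range_or_N h₂ hl₂)).symm,
      hG (h.adj_of_mem_range_or_N h₁ hl₁), n₁w, n₁₂, fun h => n₂v h.symm, fun h => hlv h.symm,
      hlw, h₁w, h₁₂, h₂v.symm, (h.ne_of_mem_L_union_C l hv).symm,
      (h.ne_of_mem_L_union_C l hw).symm⟩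

lemma KJoinWith.exists_lighter_completion [Fintype V] (h : KJoinWith G b N L ∅ C)
    (hclean : IsBccClean G (Set.range b))
    (hF : ∀ e ∈ F, e ∉ (addUniversal G (b '' S)).edgeSet)
    (hOb : IsObstructionFree (addEdges (addUniversal G (b '' S)) F))
    (hFS : ∀ e ∈ F, ∀ i ∈ S, b i ∉ e) {l : Fin p} (hlS : ∀ i ∈ S, i < l)
    (hlF : ∀ e ∈ F, b l ∉ e) {i : Fin p} (hi : i ∈ S) {u v w : V}
    (h4 : IsInducedC4 (addEdges G F) (b i) u v w) (hu : u ∈ Set.range b ∨ u ∈ N)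
    (hw : w ∈ L ∪ C) :
    ∃ F₂ : Finset (Sym2 V), (∀ e ∈ F₂, ¬ e.IsDiag) ∧
      (∀ e ∈ F₂, e ∉ (addUniversal G (b '' S)).edgeSet) ∧ F₂.card ≤ F.card ∧
      IsObstructionFree (addEdges (addUniversal G (b '' S)) F₂) ∧
      ∑ e ∈ F₂, pairWeight (nonAdjCount G b) e < ∑ e ∈ F, pairWeight (nonAdjCount G b) e := by
  obtain ⟨e₁, e₂, e₃, e₄, n₁, n₂, d₁, d₂⟩ := h4
  rw [addEdges_adj_iff_of_forall_notMem fun e he => hFS e he i hi] at e₁ n₁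
  rw [adj_comm, addEdges_adj_iff_of_forall_notMem fun e he => hFS e he i hi] at e₄
  have hv := h.mem_L_union_C_of_not_adj d₁ n₁
  have hvM := h.notMem_image_of_mem_L_union_C (S := S) hv
  have hwM := h.notMem_image_of_mem_L_union_C (S := S) hw
  have hGvw : G.Adj v w := h.isClique_L_union_C hclean i.pos hv hw e₃.ne
  have hGuv : ¬ G.Adj u v := fun hG => (hclean _ ⟨i, rfl⟩).2 ⟨u, v, w, b i,
    ⟨hG, hGvw, e₄.symm, e₁, fun h => n₂ (le_addEdges G F h), fun h => n₁ h.symm, d₂,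
      d₁.symm⟩, .inr (.inr (.inr rfl))⟩
  have huv : s(u, v) ∈ F := (((addEdges_adj G F u v).1 e₂).resolve_left hGuv).1
  have huM : u ∉ b '' S := by
    rintro ⟨j, hj, rfl⟩; exact hFS _ huv j hj (Sym2.mem_mk_left _ _)
  refine exists_minMaxSwap_completion hF hOb (u := u) (le_addUniversal hGvw) (fun z hzw hzv => ?_)
    (h.privateNeighborsJoined hclean hOb hlS hlF hi hv hw n₁) huv
    ((addEdges_addUniversal_adj_of_notMem huM hwM).not.2 n₂)
    (h.nonAdjCount_lt hv hw (fun h => n₁ h.symm) e₄.symm)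
  by_cases hz : z ∈ b '' S
  · exact addUniversal_adj_of_mem hz hzw
  rw [addUniversal_adj_of_notMem hz hvM] at hzv
  rw [addUniversal_adj_of_notMem hz hwM]
  exact h.adj_of_adj_of_separated hclean hv hw (fun h => n₁ h.symm) e₄.symm hzw hzv

/-- A completion of minimal weight already works for `G`: otherwise some `b i` with `i ∈ S` lies
on an obstruction, which yields a swap to a lighter completion. -/
theorem KJoinWith.exists_bccKCompletion_of_addUniversal [Fintype V] (h : KJoinWith G b N L ∅ C)
    (hclean : IsBccClean G (Set.range b)) {k : ℕ}
    (hS : k < {l | ∀ i ∈ S, i < l}.ncard)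
    (hU : ∃ F, IsBccKCompletion (addUniversal G (b '' S)) k F) :
    ∃ F, IsBccKCompletion G k F := by
  classical
  obtain ⟨F, ⟨hdiag, hF, hcard, hchain⟩, hmin⟩ :=
    (InvImage.wf (fun F => ∑ e ∈ F, pairWeight (nonAdjCount G b) e) wellFounded_lt).has_min
      {F | IsBccKCompletion (addUniversal G (b '' S)) k F} hU
  have hOb := hchain.isObstructionFree
  have hFS : ∀ e ∈ F, ∀ i ∈ S, b i ∉ e :=
    fun e he i hi => notMem_of_mem_addUniversal hdiag hF he ⟨i, hi, rfl⟩
  obtain ⟨x, hx, hlF⟩ := exists_mem_forall_notMem_of_card_lt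
    (s := {l | ∀ i ∈ S, i < l}.toFinset.image b)
    (by
      simp only [Finset.coe_image]
      rintro _ ⟨i, -, rfl⟩ _ ⟨j, -, rfl⟩ hne
      exact le_addUniversal (h.clique i j fun hij => hne (congrArg b hij)))
    hF (by rw [Finset.card_image_of_injective _ h.inj, ← Set.ncard_eq_toFinset_card']; omega)
  obtain ⟨l, hl, rfl⟩ := Finset.mem_image.1 hx
  have hlS : ∀ i ∈ S, i < l := by simpa using hl
  refine ⟨F, hdiag, fun e he hmem => hF e he (edgeSet_mono le_addUniversal hmem), hcard, ?_⟩
  rw [isBicliqueChain_iff_isObstructionFree]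
  refine hOb.of_agree (b '' S)
    (fun a c ha hc => (addEdges_addUniversal_adj_of_notMem ha hc).symm) ?_
  rintro _ ⟨i, hi, rfl⟩ hobs
  obtain ⟨u, v, w, h4, hu, hw⟩ :=
    h.exists_isInducedC4_of_hasObstructionAt hclean hOb hFS hlS hlF hi hobs
  obtain ⟨F₂, hdiag₂, hF₂, hcard₂, hOb₂, hlt⟩ :=
    h.exists_lighter_completion hclean hF hOb hFS hlS hlF hi h4 hu hw
  exact hmin F₂ ⟨hdiag₂, hF₂, hcard₂.trans hcard, isBicliqueChain_iff_isObstructionFree.2 hOb₂⟩ hlt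

end KJoinCompletion

lemma image_rev_middle (k p : ℕ) :
    Fin.rev '' {i : Fin p | k + 1 ≤ i.val ∧ i.val + k + 2 ≤ p} =
      {i : Fin p | k + 1 ≤ i.val ∧ i.val + k + 2 ≤ p} := by
  ext i
  refine ⟨?_, fun hi => ⟨Fin.rev i, ?_, Fin.rev_rev i⟩⟩
  · rintro ⟨j, hj, rfl⟩
    simp only [Set.mem_ofPred_eq, Fin.val_rev] at hj ⊢
    omega
  · simp only [Set.mem_ofPred_eq, Fin.val_rev] at hi ⊢
    omega

/-- The last `k + 1` indices all come after the middle. -/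
lemma lt_ncard_forall_lt_middle {k p : ℕ} (hp : 2 * (k + 1) ≤ p) :
    k < {l : Fin p | ∀ i ∈ {i : Fin p | k + 1 ≤ i.val ∧ i.val + k + 2 ≤ p}, i < l}.ncard := by
  have := Set.ncard_le_ncard_of_injOn (s := (Set.univ : Set (Fin (k + 1))))
    (t := {l : Fin p | ∀ i ∈ {i : Fin p | k + 1 ≤ i.val ∧ i.val + k + 2 ≤ p}, i < l})
    (fun j => (⟨p - 1 - j, by omega⟩ : Fin p))
    (fun j _ i hi => by
      simp only [Set.mem_ofPred_eq] at hi
      rw [Fin.lt_def]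
      dsimp
      omega)
    (fun j _ j' _ h => by simp only [Fin.mk.injEq] at h; ext; omega)
  simp only [Set.ncard_univ, Nat.card_eq_fintype_card, Fintype.card_fin] at this
  omega

/-- Simple K-join rule for bi-clique chain completion: removing the middle of
a bcc-clean simple `K`-join with at least `2(k + 1)` vertices (keeping its
`k + 1` first and `k + 1` last vertices) preserves the existence of a
bcc-`k`-completion. -/
theorem bcc_simple_kjoin_rule_safe [Fintype V] (G : SimpleGraph V) (k p : ℕ)
    (b : Fin p → V) (N L R C : Set V)
    (h : KJoinWith G b N L R C) (hsimple : L = ∅ ∨ R = ∅)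
    (hclean : ∀ i : Fin p, ¬ InInd3 G (b i) ∧ ¬ InC4 G (b i))
    (hp : 2 * (k + 1) ≤ p) :
    (∃ F : Finset (Sym2 V), IsBccKCompletion G k F) ↔
      (∃ F, IsBccKCompletion
        (G.induce {v : V |
          v ∉ b '' {i : Fin p | k + 1 ≤ i.val ∧ i.val + k + 2 ≤ p}}) k F) := by
  refine ⟨fun ⟨F, hF⟩ => hF.exists_induce _, fun ⟨F₀, hF₀⟩ => ?_⟩
  have hU := exists_bccKCompletion_addUniversal hF₀
  have hclean' : IsBccClean G (Set.range b) := by rintro _ ⟨i, rfl⟩; exact hclean i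
  rcases hsimple with rfl | rfl
  · rw [← image_rev_middle, ← Set.image_comp] at hU
    refine h.reverse.exists_bccKCompletion_of_addUniversal ?_ ?_ hU
    · rwa [Fin.rev_surjective.range_comp]
    · simpa only [image_rev_middle] using lt_ncard_forall_lt_middle hp
  · exact h.exists_bccKCompletion_of_addUniversal hclean' (lt_ncard_forall_lt_middle hp) hU
end

section
/- Let G = (V,E) be a finite simple graph admitting a bcc-k-completion, and suppose every simple K-join of G has at most 3k^2 + 6k + 2 vertices. Then |V| ≤ 2(3k^2 + 6k + 2) + 2k; in particular G has O(k^2) vertices. -/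
open SimpleGraph Finset

variable {V : Type*}

/-! Each side of the bi-clique chain graph `G + F` is a clique whose vertices have nested
neighbourhoods outside it. Removing the at most `2k` endpoints of the pairs in `F` leaves two
such cliques on which `G` and `G + F` agree, and a clique with nested outside neighbourhoods,
enumerated by increasing outside degree, is a simple `K`-join (with `L = ∅`). -/

def IsNestedClique (G : SimpleGraph V) (B : Set V) : Prop :=
  G.IsClique B ∧ ∀ u ∈ B, ∀ w ∈ B,
    (∀ v ∉ B, G.Adj v u → G.Adj v w) ∨ (∀ v ∉ B, G.Adj v w → G.Adj v u)

section NestedClique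

variable {G H : SimpleGraph V}

theorem isSimpleKJoin_range_of_adj_mono {p : ℕ} (b : Fin p → V)
    (hinj : Function.Injective b) (hclique : ∀ i j, i ≠ j → G.Adj (b i) (b j))
    (hmono : ∀ v ∉ Set.range b, ∀ i j, i ≤ j → G.Adj v (b i) → G.Adj v (b j)) :
    IsSimpleKJoin G (Set.range b) := by
  let N : Set V := {v | v ∉ Set.range b ∧ ∀ i, G.Adj v (b i)}
  let C : Set V := {v | v ∉ Set.range b ∧ v ∉ N ∧ ∀ i, ¬ G.Adj v (b i)}
  let R : Set V := {v | v ∉ Set.range b ∧ (∃ i, G.Adj v (b i)) ∧ ∃ i, ¬ G.Adj v (b i)}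
  refine ⟨p, b, N, ∅, R, C, rfl, ⟨hinj, hclique, ?_, ?_, fun v hv => hv.2, fun v hv => hv.2.2,
    ?_, ?_, ?_, by simp, ?_, by simp⟩, Or.inl rfl⟩
  · intro v hv
    by_cases hall : ∀ i, G.Adj v (b i)
    · exact Or.inl (Or.inl (Or.inl ⟨hv, hall⟩))
    by_cases hnone : ∀ i, ¬ G.Adj v (b i)
    · exact Or.inr ⟨hv, fun h => hall h.2, hnone⟩
    push Not at hall hnone
    exact Or.inl (Or.inr ⟨hv, hnone, hall⟩)
  · simp only [List.pairwise_cons, List.mem_cons, forall_eq_or_imp, Set.disjoint_left]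
    simp_all [N, R, C]
  · simpa using fun v hv => hv.2.1
  · simpa using fun v hv => hv.2.2
  · intro r hr i hi hadj
    obtain ⟨m, hm⟩ := hr.2.2
    exact hm (hmono r hr.1 i m (Fin.le_def.mpr (by omega)) hadj)
  · intro i j hij r hr hadj
    exact (hmono r hr.1 i j (Fin.le_def.mpr (by omega)) hadj.symm).symm

theorem IsNestedClique.isSimpleKJoin [Fintype V] {B : Finset V} (hB : IsNestedClique G B) :
    IsSimpleKJoin G B := by
  classical
  let outNbrs : V → Finset V := fun u => univ.filter fun v => v ∉ B ∧ G.Adj v u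
  let e : Fin #B ≃ B := B.equivFin.symm
  let deg : Fin #B → ℕ := fun i => #(outNbrs (e i))
  let b : Fin #B → V := fun i => e (Tuple.sort deg i)
  have hmem : ∀ i, b i ∈ B := fun i => (e _).2
  have hinj : Function.Injective b := fun i j h =>
    (Tuple.sort deg).injective (e.injective (Subtype.ext h))
  have hrange : Set.range b = B := by
    refine Set.Subset.antisymm (Set.range_subset_iff.mpr hmem) fun v hv => ?_
    obtain ⟨i, hi⟩ := e.surjective ⟨v, hv⟩
    exact ⟨(Tuple.sort deg).symm i, by simp [b, hi]⟩
  rw [← hrange]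
  refine isSimpleKJoin_range_of_adj_mono b hinj
    (fun i j hij => hB.1 (hmem i) (hmem j) (hinj.ne hij)) fun v hv i j hij hvi => ?_
  rw [hrange] at hv
  rcases hB.2 _ (hmem i) _ (hmem j) with hij' | hji
  · exact hij' v hv hvi
  -- the neighbourhoods are nested, so the degree order forces them to be equal
  have hsub : outNbrs (b j) ⊆ outNbrs (b i) := fun w hw => by
    simp only [outNbrs, mem_filter, mem_univ, true_and] at hw ⊢
    exact ⟨hw.1, hji w hw.1 hw.2⟩
  have heq := eq_of_subset_of_card_le hsub (Tuple.monotone_sort deg hij)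
  have hvi' : v ∈ outNbrs (b i) := by simpa [outNbrs, hvi] using hv
  rw [← heq] at hvi'
  exact (mem_filter.mp hvi').2.2

theorem IsNestedClique.subset {B B' : Set V} (hB : IsNestedClique G B) (h : B' ⊆ B) :
    IsNestedClique G B' := by
  refine ⟨hB.1.subset h, fun u hu w hw => ?_⟩
  have inside : ∀ z ∈ B', ∀ v ∉ B', v ∈ B → G.Adj v z := fun z hz v hv hvB =>
    hB.1 hvB (h hz) fun hvz => hv (hvz ▸ hz)
  rcases hB.2 u (h hu) w (h hw) with huw | hwu
  · refine Or.inl fun v hv hvu => ?_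
    by_cases hvB : v ∈ B
    exacts [inside w hw v hv hvB, huw v hvB hvu]
  · refine Or.inr fun v hv hvw => ?_
    by_cases hvB : v ∈ B
    exacts [inside u hu v hv hvB, hwu v hvB hvw]

theorem IsNestedClique.of_adj_iff {B : Set V} (hB : IsNestedClique H B)
    (hGH : ∀ u, ∀ v ∈ B, G.Adj u v ↔ H.Adj u v) : IsNestedClique G B := by
  refine ⟨fun u hu w hw huw => (hGH u w hw).mpr (hB.1 hu hw huw), fun u hu w hw => ?_⟩
  simp only [hGH _ _ hu, hGH _ _ hw]
  exact hB.2 u hu w hw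

theorem IsBicliqueChain.exists_nestedClique_cover (hH : IsBicliqueChain H) :
    ∃ X Y : Set V, IsNestedClique H X ∧ IsNestedClique H Y ∧ ∀ v, v ∈ X ∨ v ∈ Y := by
  obtain ⟨q, x, Y, -, -, hcov, hX, hY, hmono⟩ := hH
  refine ⟨Set.range x, Y, ⟨?_, ?_⟩, ⟨hY, fun u hu w hw => ?_⟩, hcov⟩
  · rintro _ ⟨i, rfl⟩ _ ⟨j, rfl⟩ hne
    exact hX i j fun hij => hne (hij ▸ rfl)
  · rintro _ ⟨i, rfl⟩ _ ⟨j, rfl⟩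
    have hmonoX : ∀ i j, i ≤ j → ∀ v ∉ Set.range x, H.Adj v (x i) → H.Adj v (x j) :=
      fun i j hij v hv hvi => (hmono i j hij v ((hcov v).resolve_left hv) hvi.symm).symm
    rcases le_total i j with hij | hji
    · exact Or.inl (hmonoX i j hij)
    · exact Or.inr (hmonoX j i hji)
  · by_contra hcon
    simp only [not_or, not_forall] at hcon
    obtain ⟨⟨v, hv, hvu, hvw⟩, ⟨v', hv', hv'w, hv'u⟩⟩ := hcon
    obtain ⟨i, rfl⟩ := (hcov v).resolve_right hv
    obtain ⟨j, rfl⟩ := (hcov v').resolve_right hv'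
    rcases le_total i j with hij | hji
    · exact hv'u (hmono i j hij u hu hvu)
    · exact hvw (hmono j i hji w hw hv'w)

end NestedClique

theorem addEdges_adj_iff_of_notMem (G : SimpleGraph V) {F : Finset (Sym2 V)} {v : V}
    (hv : ∀ e ∈ F, v ∉ e) (u : V) : (addEdges G F).Adj u v ↔ G.Adj u v := by
  simp only [addEdges, sup_adj, fromEdgeSet_adj, Finset.mem_coe, or_iff_left_iff_imp]
  exact fun h => absurd (Sym2.mem_mk_right u v) (hv _ h.1)

/-- Kernel size for bi-clique chain completion: a positive instance whose
simple `K`-joins have at most `3k² + 6k + 2` vertices has at most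
`2(3k² + 6k + 2) + 2k = O(k²)` vertices. -/
theorem bcc_kernel_size [Fintype V] (G : SimpleGraph V) (k : ℕ)
    (hpos : ∃ F : Finset (Sym2 V), IsBccKCompletion G k F)
    (hKJ : ∀ B : Set V, IsSimpleKJoin G B → B.ncard ≤ 3 * k ^ 2 + 6 * k + 2) :
    Fintype.card V ≤ 2 * (3 * k ^ 2 + 6 * k + 2) + 2 * k := by
  classical
  obtain ⟨F, -, -, hFk, hchain⟩ := hpos
  set S := F.biUnion Sym2.toFinset
  have hS : #S ≤ 2 * k := calc
    #S ≤ #F * 2 := card_biUnion_le_card_mul _ _ 2 fun e _ => by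
      rw [Sym2.card_toFinset]; split_ifs <;> omega
    _ ≤ 2 * k := by omega
  have hGH : ∀ u, ∀ v ∉ S, G.Adj u v ↔ (addEdges G F).Adj u v := fun u v hv =>
    (addEdges_adj_iff_of_notMem G (fun e he hve => hv (mem_biUnion.mpr
      ⟨e, he, Sym2.mem_toFinset.mpr hve⟩)) u).symm
  have hside : ∀ Z : Set V, IsNestedClique (addEdges G F) Z →
      #(univ.filter fun v => v ∈ Z ∧ v ∉ S) ≤ 3 * k ^ 2 + 6 * k + 2 := fun Z hZ => by
    have hsub : ↑(univ.filter fun v => v ∈ Z ∧ v ∉ S) ⊆ Z := fun v hv => by simp_all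
    rw [← Set.ncard_coe_finset]
    exact hKJ _ ((hZ.subset hsub).of_adj_iff fun u v hv => hGH u v (by simp_all)).isSimpleKJoin
  obtain ⟨X, Y, hX, hY, hcov⟩ := hchain.exists_nestedClique_cover
  calc Fintype.card V
      ≤ #((univ.filter fun v => v ∈ X ∧ v ∉ S) ∪ (univ.filter fun v => v ∈ Y ∧ v ∉ S) ∪ S) :=
        card_le_card fun v _ => by have := hcov v; by_cases v ∈ S <;> simp_all
    _ ≤ #(univ.filter fun v => v ∈ X ∧ v ∉ S) + #(univ.filter fun v => v ∈ Y ∧ v ∉ S) + #S :=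
        (card_union_le _ _).trans (Nat.add_le_add_right (card_union_le _ _) _)
    _ ≤ 2 * (3 * k ^ 2 + 6 * k + 2) + 2 * k := by linarith [hside X hX, hside Y hY]
end
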